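/- arXiv:2509.06520 — 6 statements merged into one kernel-verified Lean document; each statement's English description precedes it below -/
import Mathlib

section
/- With α_1 = (d_1+d_1⁻¹)/2, α_2 = (d_1−d_1⁻¹)/2, α_0 = max{d_1,d_1⁻¹}, d_1 > 0, d_1 ≠ 1, a ≠ b reals, and D_0(λ) = α_1 sin(√λ(b−a))/√λ − α_2 sin(√λ ξ)/√λ, for every positive integer m the function D_0 has at least one zero in the open interval (x_{1,m}, x_{2,m}), where x_{1,m} = (mπ − arcsin(α_0/α_1))²/(a−b)² and x_{2,m} = (mπ + arcsin(α_0/α_1))²/(a−b)². -/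
/-- With `α₁ = (d₁+d₁⁻¹)/2`, `α₂ = (d₁−d₁⁻¹)/2`, `d₁ > 0`, `d₁ ≠ 1`, `a ≠ b` reals,
`α₀` satisfying `|α₂| < α₀ < α₁`, and
`D₀(λ) = α₁ sin(√λ(b−a))/√λ − α₂ sin(√λ ξ)/√λ`, for every positive integer `m`
the function `D₀` has at least one zero in the open interval
`((mπ − arcsin(α₀/α₁))²/(a−b)², (mπ + arcsin(α₀/α₁))²/(a−b)²)`. -/
theorem stmt_5 (d₁ a b ξ α₀ : ℝ) (hd₁ : 0 < d₁) (hd₁' : d₁ ≠ 1) (hab : a ≠ b)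
    (hα₂ : |(d₁ - d₁⁻¹) / 2| < α₀) (hα₁ : α₀ < (d₁ + d₁⁻¹) / 2)
    (m : ℕ) (hm : 1 ≤ m) :
    ∃ lam : ℝ,
      lam ∈ Set.Ioo
          (((m : ℝ) * Real.pi - Real.arcsin (α₀ / ((d₁ + d₁⁻¹) / 2))) ^ 2 / (a - b) ^ 2)
          (((m : ℝ) * Real.pi + Real.arcsin (α₀ / ((d₁ + d₁⁻¹) / 2))) ^ 2 / (a - b) ^ 2) ∧
      (d₁ + d₁⁻¹) / 2 * Real.sin (Real.sqrt lam * (b - a)) / Real.sqrt lam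
        - (d₁ - d₁⁻¹) / 2 * Real.sin (Real.sqrt lam * ξ) / Real.sqrt lam = 0 := by
  set α₁ : ℝ := (d₁ + d₁⁻¹) / 2 with hα₁def
  set α₂ : ℝ := (d₁ - d₁⁻¹) / 2 with hα₂def
  have hα₀pos : 0 < α₀ := lt_of_le_of_lt (abs_nonneg _) hα₂
  have hα₁pos : 0 < α₁ := hα₀pos.trans hα₁
  have hr0 : 0 < α₀ / α₁ := div_pos hα₀pos hα₁pos
  have hr1 : α₀ / α₁ < 1 := (div_lt_one hα₁pos).mpr hα₁
  set θ : ℝ := Real.arcsin (α₀ / α₁) with hθdef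
  have hθpos : 0 < θ := Real.arcsin_pos.mpr hr0
  have hθle : θ ≤ Real.pi / 2 := Real.arcsin_le_pi_div_two _
  have hsinθ : Real.sin θ = α₀ / α₁ :=
    Real.sin_arcsin (by linarith) hr1.le
  have hπ : 0 < Real.pi := Real.pi_pos
  have hmπ : Real.pi ≤ (m : ℝ) * Real.pi := by
    have h1 : (1 : ℝ) ≤ (m : ℝ) := by exact_mod_cast hm
    nlinarith
  set u₁ : ℝ := (m : ℝ) * Real.pi - θ with hu₁
  set u₂ : ℝ := (m : ℝ) * Real.pi + θ with hu₂
  have hu₁pos : 0 < u₁ := by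
    have : θ < Real.pi := lt_of_le_of_lt hθle (by linarith)
    simp only [hu₁]; linarith
  have hu₂pos : 0 < u₂ := by positivity
  have hu₁₂ : u₁ < u₂ := by simp only [hu₁, hu₂]; linarith
  set L : ℝ := |a - b| with hL
  have hLpos : 0 < L := abs_pos.mpr (sub_ne_zero.mpr hab)
  have habsq : (a - b) ^ 2 = L ^ 2 := (sq_abs _).symm
  set x₁ : ℝ := u₁ ^ 2 / (a - b) ^ 2 with hx₁def
  set x₂ : ℝ := u₂ ^ 2 / (a - b) ^ 2 with hx₂def
  have hsx₁ : Real.sqrt x₁ = u₁ / L := by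
    rw [hx₁def, habsq, ← div_pow, Real.sqrt_sq (by positivity)]
  have hsx₂ : Real.sqrt x₂ = u₂ / L := by
    rw [hx₂def, habsq, ← div_pow, Real.sqrt_sq (by positivity)]
  have hx₁₂ : x₁ < x₂ := by
    rw [hx₁def, hx₂def, habsq]
    exact (div_lt_div_iff_of_pos_right (by positivity)).mpr (by nlinarith)
  -- sign decomposition of b - a
  obtain ⟨ε, hε, hεL⟩ : ∃ ε : ℝ, (ε = 1 ∨ ε = -1) ∧ b - a = ε * L := by
    rcases lt_or_gt_of_ne hab with h | h
    · exact ⟨1, Or.inl rfl, by rw [hL, abs_of_nonpos (by linarith)]; ring⟩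
    · exact ⟨-1, Or.inr rfl, by rw [hL, abs_of_nonneg (by linarith)]; ring⟩
  set c : ℝ := (-1 : ℝ) ^ m with hc
  have hcval : c = 1 ∨ c = -1 := by
    rcases Nat.even_or_odd m with h | h
    · exact Or.inl (by simp [hc, h.neg_one_pow])
    · exact Or.inr (by simp [hc, h.neg_one_pow])
  have hsin_u₁ : Real.sin u₁ = -(c * (α₀ / α₁)) := by
    rw [hu₁, Real.sin_nat_mul_pi_sub, hsinθ, hc]
  have hsin_u₂ : Real.sin u₂ = c * (α₀ / α₁) := by
    rw [hu₂, Real.sin_add, Real.sin_nat_mul_pi, hsinθ, hc]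
    rw [show Real.cos ((m : ℝ) * Real.pi) = (-1 : ℝ) ^ m by
      simpa using Real.cos_nat_mul_pi_sub 0 m]
    ring
  -- the numerator function
  set f : ℝ → ℝ := fun lam =>
    α₁ * Real.sin (Real.sqrt lam * (b - a)) - α₂ * Real.sin (Real.sqrt lam * ξ) with hf
  have hfc : Continuous f := by
    apply Continuous.sub
    · exact continuous_const.mul (Real.continuous_sin.comp
        (Real.continuous_sqrt.mul continuous_const))
    · exact continuous_const.mul (Real.continuous_sin.comp
        (Real.continuous_sqrt.mul continuous_const))
  have hsinε : ∀ x : ℝ, Real.sin (ε * x) = ε * Real.sin x := by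
    intro x
    rcases hε with h | h <;> simp [h, Real.sin_neg]
  have hfx₁ : f x₁ = -(ε * c) * α₀ - α₂ * Real.sin (Real.sqrt x₁ * ξ) := by
    rw [hf]
    simp only
    rw [hsx₁, hεL, show u₁ / L * (ε * L) = ε * u₁ by field_simp,
      hsinε, hsin_u₁, ← hsx₁]
    field_simp
  have hfx₂ : f x₂ = (ε * c) * α₀ - α₂ * Real.sin (Real.sqrt x₂ * ξ) := by
    rw [hf]
    simp only
    rw [hsx₂, hεL, show u₂ / L * (ε * L) = ε * u₂ by field_simp,
      hsinε, hsin_u₂, ← hsx₂]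
    field_simp
  -- bounds on the perturbation terms
  have hbound : ∀ x : ℝ, |α₂ * Real.sin x| < α₀ := by
    intro x
    calc |α₂ * Real.sin x| = |α₂| * |Real.sin x| := abs_mul _ _
      _ ≤ |α₂| * 1 := by
          exact mul_le_mul_of_nonneg_left (Real.abs_sin_le_one x) (abs_nonneg _)
      _ < α₀ := by simpa using hα₂
  have hb₁ := abs_lt.mp (hbound (Real.sqrt x₁ * ξ))
  have hb₂ := abs_lt.mp (hbound (Real.sqrt x₂ * ξ))
  have hεc : ε * c = 1 ∨ ε * c = -1 := by
    rcases hε with h | h <;> rcases hcval with h' | h' <;> simp [h, h']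
  have key : ∃ lam ∈ Set.Ioo x₁ x₂, f lam = 0 := by
    rcases hεc with h | h
    · -- f x₁ < 0 < f x₂ : increasing IVT
      have h1 : f x₁ < 0 := by rw [hfx₁, h]; linarith
      have h2 : 0 < f x₂ := by rw [hfx₂, h]; linarith
      have := intermediate_value_Ioo hx₁₂.le hfc.continuousOn
        (Set.mem_Ioo.mpr ⟨h1, h2⟩)
      obtain ⟨lam, hlam, hlam0⟩ := this
      exact ⟨lam, hlam, hlam0⟩
    · have h1 : 0 < f x₁ := by rw [hfx₁, h]; linarith
      have h2 : f x₂ < 0 := by rw [hfx₂, h]; linarith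
      have := intermediate_value_Ioo' hx₁₂.le hfc.continuousOn
        (Set.mem_Ioo.mpr ⟨h2, h1⟩)
      obtain ⟨lam, hlam, hlam0⟩ := this
      exact ⟨lam, hlam, hlam0⟩
  obtain ⟨lam, hlam, hlam0⟩ := key
  refine ⟨lam, hlam, ?_⟩
  have : α₁ * Real.sin (Real.sqrt lam * (b - a)) - α₂ * Real.sin (Real.sqrt lam * ξ) = 0 :=
    hlam0
  rw [div_sub_div_same, this, zero_div]
end

section
/- Let ρ be positive and W¹₂ on (0,b₁)∪(b₁,b) with jump ρ(b₁+) = b₂ρ(b₁−), and let u solve −u'' = λρu on (0,b). Define x(r) = ∫₀^r √ρ(t)dt, z(x) = ρ(r)^{1/4} u(r), and σ(x) = (1/4)ρ'(r)/ρ(r)^{3/2} + g(x) where g'(x) = (1/16)(ρ'(r))²/ρ(r)³ away from d = x(b₁). Then on (0,d)∪(d,a), z satisfies −(z' − σz)' − σ z' = λ z. -/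
private lemma rpow_div_four {p : ℝ} (hp : 0 < p) (n : ℕ) :
    p ^ ((n : ℝ) / 4) = (p ^ ((1 : ℝ) / 4)) ^ n := by
  rw [← Real.rpow_natCast (p ^ ((1 : ℝ) / 4)) n, ← Real.rpow_mul hp.le]
  congr 1
  ring


/-- Liouville transformation.  Let `ρ` be positive and (piecewise) smooth on
`(0,b₁)∪(b₁,b)` with jump `ρ(b₁+) = b₂ρ(b₁−)`, and let `u` solve `−u'' = λρu`.
With `x(r) = ∫₀^r √ρ`, inverse change of variables `rr`, `z(x) = ρ(r)^{1/4}u(r)`,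
and `σ(x) = (1/4)ρ'(r)/ρ(r)^{3/2} + g(x)` where `g'(x) = (1/16)ρ'(r)²/ρ(r)³`,
the function `z` satisfies `−(z' − σz)' − σz' = λz` on `(0,d)∪(d,a)`, `d = x(b₁)`,
`a = x(b)`. -/
theorem stmt_7 (b b₁ b₂ lam a d ρm : ℝ) (ρ ρ' u u' g rr : ℝ → ℝ)
    (hb₁ : 0 < b₁) (hb : b₁ < b) (hb₂ : 0 < b₂) (hb₂' : b₂ ≠ 1)
    (hd : 0 < d) (hda : d < a)
    (hρpos : ∀ r ∈ Set.Icc (0 : ℝ) b, r ≠ b₁ → 0 < ρ r)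
    (hρ : ∀ r ∈ Set.Ioo (0 : ℝ) b, r ≠ b₁ → HasDerivAt ρ (ρ' r) r)
    (hjump₁ : Filter.Tendsto ρ (nhdsWithin b₁ (Set.Iio b₁)) (nhds ρm))
    (hjump₂ : Filter.Tendsto ρ (nhdsWithin b₁ (Set.Ioi b₁)) (nhds (b₂ * ρm)))
    (hu : ∀ r ∈ Set.Ioo (0 : ℝ) b, HasDerivAt u (u' r) r)
    (hu' : ∀ r ∈ Set.Ioo (0 : ℝ) b, r ≠ b₁ → HasDerivAt u' (-lam * ρ r * u r) r)
    (hrr : ∀ s ∈ Set.Ioo (0 : ℝ) d ∪ Set.Ioo d a,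
      HasDerivAt rr (1 / Real.sqrt (ρ (rr s))) s)
    (hmap₁ : ∀ s ∈ Set.Ioo (0 : ℝ) d, rr s ∈ Set.Ioo (0 : ℝ) b₁)
    (hmap₂ : ∀ s ∈ Set.Ioo d a, rr s ∈ Set.Ioo b₁ b)
    (hg : ∀ s ∈ Set.Ioo (0 : ℝ) d ∪ Set.Ioo d a,
      HasDerivAt g ((1 / 16) * (ρ' (rr s)) ^ 2 / (ρ (rr s)) ^ 3) s) :
    ∀ s ∈ Set.Ioo (0 : ℝ) d ∪ Set.Ioo d a,
      HasDerivAt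
        (fun t => deriv (fun x => (ρ (rr x)) ^ ((1 : ℝ) / 4) * u (rr x)) t
          - ((1 / 4) * ρ' (rr t) / (ρ (rr t)) ^ ((3 : ℝ) / 2) + g t) *
              ((ρ (rr t)) ^ ((1 : ℝ) / 4) * u (rr t)))
        (-((1 / 4) * ρ' (rr s) / (ρ (rr s)) ^ ((3 : ℝ) / 2) + g s) *
            deriv (fun x => (ρ (rr x)) ^ ((1 : ℝ) / 4) * u (rr x)) s
          - lam * ((ρ (rr s)) ^ ((1 : ℝ) / 4) * u (rr s))) s := by
  have hUopen : IsOpen (Set.Ioo (0 : ℝ) d ∪ Set.Ioo d a) := isOpen_Ioo.union isOpen_Ioo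
  -- basic facts about rr t for t in U
  have hrfact : ∀ t ∈ Set.Ioo (0 : ℝ) d ∪ Set.Ioo d a,
      rr t ∈ Set.Ioo (0 : ℝ) b ∧ rr t ≠ b₁ := by
    intro t ht
    rcases ht with h | h
    · obtain ⟨h1, h2⟩ := hmap₁ t h
      exact ⟨⟨h1, h2.trans hb⟩, h2.ne⟩
    · obtain ⟨h1, h2⟩ := hmap₂ t h
      exact ⟨⟨hb₁.trans h1, h2⟩, h1.ne'⟩
  have hppos : ∀ t ∈ Set.Ioo (0 : ℝ) d ∪ Set.Ioo d a, 0 < ρ (rr t) := by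
    intro t ht
    obtain ⟨hmem, hne⟩ := hrfact t ht
    exact hρpos (rr t) ⟨hmem.1.le, hmem.2.le⟩ hne
  -- derivative of z = ρ(rr x)^{1/4} * u(rr x)
  have hzd : ∀ t ∈ Set.Ioo (0 : ℝ) d ∪ Set.Ioo d a,
      HasDerivAt (fun x => (ρ (rr x)) ^ ((1 : ℝ) / 4) * u (rr x))
        (1 / 4 * ρ' (rr t) * (ρ (rr t)) ^ (-((5 : ℝ) / 4)) * u (rr t)
          + u' (rr t) * (ρ (rr t)) ^ (-((1 : ℝ) / 4))) t := by
    intro t ht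
    obtain ⟨hmem, hne⟩ := hrfact t ht
    have hp : 0 < ρ (rr t) := hppos t ht
    have hP : HasDerivAt (fun x => ρ (rr x))
        (ρ' (rr t) * (1 / Real.sqrt (ρ (rr t)))) t :=
      (hρ (rr t) hmem hne).comp t (hrr t ht)
    have hQ : HasDerivAt (fun x => (ρ (rr x)) ^ ((1 : ℝ) / 4))
        ((1 : ℝ) / 4 * (ρ (rr t)) ^ ((1 : ℝ) / 4 - 1)
          * (ρ' (rr t) * (1 / Real.sqrt (ρ (rr t))))) t :=
      (Real.hasDerivAt_rpow_const (p := (1 : ℝ) / 4) (Or.inl hp.ne')).comp (h₂ := fun y => y ^ ((1 : ℝ) / 4)) t hP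
    have hUc : HasDerivAt (fun x => u (rr x))
        (u' (rr t) * (1 / Real.sqrt (ρ (rr t)))) t :=
      (hu (rr t) hmem).comp t (hrr t ht)
    have := hQ.mul hUc
    refine this.congr_deriv ?_
    have hA : 0 < (ρ (rr t)) ^ ((1 : ℝ) / 4) := Real.rpow_pos_of_pos hp _
    have f1 : Real.sqrt (ρ (rr t)) = ((ρ (rr t)) ^ ((1 : ℝ) / 4)) ^ 2 := by
      rw [Real.sqrt_eq_rpow, show (1 : ℝ) / 2 = ((2 : ℕ) : ℝ) / 4 by norm_num,
        rpow_div_four hp]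
    have f3 : (ρ (rr t)) ^ (-((5 : ℝ) / 4)) = (((ρ (rr t)) ^ ((1 : ℝ) / 4)) ^ 5)⁻¹ := by
      rw [show -((5 : ℝ) / 4) = -(((5 : ℕ) : ℝ) / 4) by norm_num,
        Real.rpow_neg hp.le, rpow_div_four hp]
    have f4 : (ρ (rr t)) ^ (-((1 : ℝ) / 4)) = ((ρ (rr t)) ^ ((1 : ℝ) / 4))⁻¹ := by
      rw [show -((1 : ℝ) / 4) = -(((1 : ℕ) : ℝ) / 4) by norm_num,
        Real.rpow_neg hp.le, rpow_div_four hp, pow_one]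
    have f6 : (ρ (rr t)) ^ ((1 : ℝ) / 4 - 1) = (((ρ (rr t)) ^ ((1 : ℝ) / 4)) ^ 3)⁻¹ := by
      rw [show (1 : ℝ) / 4 - 1 = -(((3 : ℕ) : ℝ) / 4) by norm_num,
        Real.rpow_neg hp.le, rpow_div_four hp]
    rw [f1, f3, f4, f6]
    field_simp
  intro s hs
  obtain ⟨hmem, hne⟩ := hrfact s hs
  have hp : 0 < ρ (rr s) := hppos s hs
  -- the function equals a nicer one near s
  have hF : (fun t => deriv (fun x => (ρ (rr x)) ^ ((1 : ℝ) / 4) * u (rr x)) t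
          - ((1 / 4) * ρ' (rr t) / (ρ (rr t)) ^ ((3 : ℝ) / 2) + g t) *
              ((ρ (rr t)) ^ ((1 : ℝ) / 4) * u (rr t)))
      =ᶠ[nhds s] (fun t => u' (rr t) * (ρ (rr t)) ^ (-((1 : ℝ) / 4))
          - g t * ((ρ (rr t)) ^ ((1 : ℝ) / 4) * u (rr t))) := by
    refine Filter.eventuallyEq_of_mem (hUopen.mem_nhds hs) ?_
    intro t ht
    have hpt : 0 < ρ (rr t) := hppos t ht
    have hdz := (hzd t ht).deriv
    simp only [hdz]
    have hc : (ρ (rr t)) ^ (-((5 : ℝ) / 4))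
        = (ρ (rr t)) ^ ((1 : ℝ) / 4) / (ρ (rr t)) ^ ((3 : ℝ) / 2) := by
      rw [← Real.rpow_sub hpt]
      norm_num
    have h32 : (ρ (rr t)) ^ ((3 : ℝ) / 2) ≠ 0 := (Real.rpow_pos_of_pos hpt _).ne'
    rw [hc]
    field_simp
    ring
  -- derivative of the nicer function
  have h1 : HasDerivAt (fun x => u' (rr x))
      ((-lam * ρ (rr s) * u (rr s)) * (1 / Real.sqrt (ρ (rr s)))) s :=
    (hu' (rr s) hmem hne).comp s (hrr s hs)
  have hP : HasDerivAt (fun x => ρ (rr x))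
      (ρ' (rr s) * (1 / Real.sqrt (ρ (rr s)))) s :=
    (hρ (rr s) hmem hne).comp s (hrr s hs)
  have h2 : HasDerivAt (fun x => (ρ (rr x)) ^ (-((1 : ℝ) / 4)))
      ((-((1 : ℝ) / 4) * (ρ (rr s)) ^ (-((1 : ℝ) / 4) - 1))
        * (ρ' (rr s) * (1 / Real.sqrt (ρ (rr s))))) s :=
    (Real.hasDerivAt_rpow_const (p := -((1 : ℝ) / 4)) (Or.inl hp.ne')).comp (h₂ := fun y => y ^ (-((1 : ℝ) / 4))) s hP
  have h3 := h1.mul h2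
  have h5 := hzd s hs
  have h6 := (hg s hs).mul h5
  have hH := h3.sub h6
  have hfinal := hH.congr_of_eventuallyEq hF
  refine hfinal.congr_deriv ?_
  rw [(hzd s hs).deriv]
  -- algebra: express everything through A = ρ(rr s)^{1/4}
  have hA : 0 < (ρ (rr s)) ^ ((1 : ℝ) / 4) := Real.rpow_pos_of_pos hp _
  have f1 : Real.sqrt (ρ (rr s)) = ((ρ (rr s)) ^ ((1 : ℝ) / 4)) ^ 2 := by
    rw [Real.sqrt_eq_rpow, show (1 : ℝ) / 2 = ((2 : ℕ) : ℝ) / 4 by norm_num,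
      rpow_div_four hp]
  have f2 : (ρ (rr s)) ^ ((3 : ℝ) / 2) = ((ρ (rr s)) ^ ((1 : ℝ) / 4)) ^ 6 := by
    rw [show (3 : ℝ) / 2 = ((6 : ℕ) : ℝ) / 4 by norm_num, rpow_div_four hp]
  have f3 : (ρ (rr s)) ^ (-((5 : ℝ) / 4)) = (((ρ (rr s)) ^ ((1 : ℝ) / 4)) ^ 5)⁻¹ := by
    rw [show -((5 : ℝ) / 4) = -(((5 : ℕ) : ℝ) / 4) by norm_num,
      Real.rpow_neg hp.le, rpow_div_four hp]
  have f4 : (ρ (rr s)) ^ (-((1 : ℝ) / 4)) = ((ρ (rr s)) ^ ((1 : ℝ) / 4))⁻¹ := by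
    rw [show -((1 : ℝ) / 4) = -(((1 : ℕ) : ℝ) / 4) by norm_num,
      Real.rpow_neg hp.le, rpow_div_four hp, pow_one]
  have f6 : (ρ (rr s)) ^ (-((1 : ℝ) / 4) - 1) = (((ρ (rr s)) ^ ((1 : ℝ) / 4)) ^ 5)⁻¹ := by
    rw [show -((1 : ℝ) / 4) - 1 = -(((5 : ℕ) : ℝ) / 4) by norm_num,
      Real.rpow_neg hp.le, rpow_div_four hp]
  have f5 : ρ (rr s) = ((ρ (rr s)) ^ ((1 : ℝ) / 4)) ^ 4 := by
    rw [← rpow_div_four hp 4, show ((4 : ℕ) : ℝ) / 4 = ((1 : ℕ) : ℝ) by norm_num,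
      Real.rpow_natCast, pow_one]
  have f7 : (ρ (rr s)) ^ (3 : ℕ) = ((ρ (rr s)) ^ ((1 : ℝ) / 4)) ^ 12 := by
    rw [← rpow_div_four hp 12, show ((12 : ℕ) : ℝ) / 4 = ((3 : ℕ) : ℝ) by norm_num,
      Real.rpow_natCast]
  rw [f1, f2, f3, f4, f6]
  generalize hq : (ρ (rr s)) ^ ((1 : ℝ) / 4) = A at f5 f7 hA ⊢
  rw [f7, f5]
  field_simp
  ring
end

section
/- Under the Liouville transformation z(x) = ρ(r)^{1/4}u(r) with x = ∫₀^r √ρ, the transformed solution satisfies the jump conditions z(d+) = d₁ z(d−) and z^{[1]}(d+) = d₁⁻¹ z^{[1]}(d−) + d₂ z(d−), where d₁ = b₂^{1/4}, d₂ = g(d−) b₂^{−1/4} − g(d+) b₂^{1/4}, d = ∫₀^{b₁}√ρ; in particular d₂ = 0 if and only if g(d−) = b₂^{1/2} g(d+). -/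
open Filter Set Topology

/- With `z = ρ(r)^{1/4} u(r)` and `r' = ρ(r)^{-1/2}`, differentiating `ρ^{1/4}` produces the term
`ρ'/(4ρ^{3/2}) ⋅ z`, which is exactly what the first summand of `σ` removes, so
`z^{[1]} = ρ(r)^{-1/4} u'(r) - g z`. Every factor here has one-sided limits at `d`, and they differ
across `d` only through `ρ(b₁+) = b₂ ρ(b₁-)` and `g(d±)`; the jump conditions are the resulting
identities between the limits. -/

-- The left-hand side is in the form `HasDerivAt.rpow_const` and `HasDerivAt.mul` produce it.
lemma liouville_quasiDeriv_identity (a p v w G : ℝ) (ha : 0 < a) :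
    p * (1 / √a) * (1 / 4) * a ^ ((1 : ℝ) / 4 - 1) * w + a ^ ((1 : ℝ) / 4) * (v * (1 / √a))
      - ((1 / 4) * p / a ^ ((3 : ℝ) / 2) + G) * (a ^ ((1 : ℝ) / 4) * w)
      = a ^ (-(1 : ℝ) / 4) * v - G * (a ^ ((1 : ℝ) / 4) * w) := by
  set t := a ^ ((1 : ℝ) / 4) with ht
  have ht_pos : 0 < t := Real.rpow_pos_of_pos ha _
  have rpow_eq_pow (n : ℕ) : a ^ ((n : ℝ) / 4) = t ^ n := by
    rw [ht, ← Real.rpow_natCast, ← Real.rpow_mul ha.le]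
    ring_nf
  have hsqrt : √a = t ^ 2 := by rw [Real.sqrt_eq_rpow, ← rpow_eq_pow]; norm_num
  have h32 : a ^ ((3 : ℝ) / 2) = t ^ 6 := by rw [← rpow_eq_pow]; norm_num
  have hm34 : a ^ ((1 : ℝ) / 4 - 1) = (t ^ 3)⁻¹ := by
    rw [← rpow_eq_pow, ← Real.rpow_neg ha.le]; norm_num
  have hm14 : a ^ (-(1 : ℝ) / 4) = t⁻¹ := by
    rw [neg_div, Real.rpow_neg ha.le]
  rw [hsqrt, h32, hm34, hm14]
  field_simp
  ring

lemma deriv_liouville_sub_sigma_mul {ρ u rr : ℝ → ℝ} {ρ' u' G s : ℝ}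
    (hpos : 0 < ρ (rr s)) (hρ : HasDerivAt ρ ρ' (rr s)) (hu : HasDerivAt u u' (rr s))
    (hrr : HasDerivAt rr (1 / √(ρ (rr s))) s) :
    deriv (fun x => ρ (rr x) ^ ((1 : ℝ) / 4) * u (rr x)) s
        - ((1 / 4) * ρ' / ρ (rr s) ^ ((3 : ℝ) / 2) + G) * (ρ (rr s) ^ ((1 : ℝ) / 4) * u (rr s))
      = ρ (rr s) ^ (-(1 : ℝ) / 4) * u' - G * (ρ (rr s) ^ ((1 : ℝ) / 4) * u (rr s)) := by
  have hz : HasDerivAt (fun x => ρ (rr x) ^ ((1 : ℝ) / 4) * u (rr x)) _ s :=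
    ((hρ.comp s hrr).rpow_const (Or.inl hpos.ne')).mul (hu.comp s hrr)
  rw [hz.deriv]
  exact liouville_quasiDeriv_identity _ _ _ _ _ hpos

lemma tendsto_liouville_quasiDeriv {α : Type*} {l : Filter α} {p v w g : α → ℝ} {a V W G : ℝ}
    (ha : a ≠ 0) (hp : Tendsto p l (𝓝 a)) (hv : Tendsto v l (𝓝 V)) (hw : Tendsto w l (𝓝 W))
    (hg : Tendsto g l (𝓝 G)) :
    Tendsto (fun s => p s ^ (-(1 : ℝ) / 4) * v s - g s * (p s ^ ((1 : ℝ) / 4) * w s)) l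
      (𝓝 (a ^ (-(1 : ℝ) / 4) * V - G * (a ^ ((1 : ℝ) / 4) * W))) :=
  ((hp.rpow_const (Or.inl ha)).mul hv).sub (hg.mul ((hp.rpow_const (Or.inl ha)).mul hw))

lemma liouville_jump_quasiDeriv {b m V W Gl Gr : ℝ} (hb : 0 < b) (hm : 0 < m) :
    (b * m) ^ (-(1 : ℝ) / 4) * V - Gr * ((b * m) ^ ((1 : ℝ) / 4) * W)
      = (b ^ ((1 : ℝ) / 4))⁻¹ * (m ^ (-(1 : ℝ) / 4) * V - Gl * (m ^ ((1 : ℝ) / 4) * W))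
        + (Gl * b ^ (-(1 : ℝ) / 4) - Gr * b ^ ((1 : ℝ) / 4)) * (m ^ ((1 : ℝ) / 4) * W) := by
  have hb4 : b ^ ((1 : ℝ) / 4) ≠ 0 := (Real.rpow_pos_of_pos hb _).ne'
  simp only [Real.mul_rpow hb.le hm.le, neg_div, Real.rpow_neg hb.le, Real.rpow_neg hm.le]
  field_simp
  ring

lemma liouville_jump_coeff_eq_zero_iff {b Gl Gr : ℝ} (hb : 0 < b) :
    Gl * b ^ (-(1 : ℝ) / 4) - Gr * b ^ ((1 : ℝ) / 4) = 0 ↔ Gl = √b * Gr := by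
  have hb4 : 0 < b ^ ((1 : ℝ) / 4) := Real.rpow_pos_of_pos hb _
  have hsqrt : √b = (b ^ ((1 : ℝ) / 4)) ^ 2 := by
    rw [Real.sqrt_eq_rpow, ← Real.rpow_natCast, ← Real.rpow_mul hb.le]
    norm_num
  rw [hsqrt, neg_div, Real.rpow_neg hb.le, sub_eq_zero, ← div_eq_mul_inv, div_eq_iff hb4.ne']
  constructor <;> intro h <;> rw [h] <;> ring

theorem stmt_8_general (b₁ b₂ d c e r₀ r₁ ρm gdm gdp : ℝ) (ρ ρ' u u' g rr : ℝ → ℝ)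
    (hb₂ : 0 < b₂) (hr₀ : r₀ < b₁) (hr₁ : b₁ < r₁)
    (hc : c < d) (he : d < e) (hρm : 0 < ρm)
    (hρpos : ∀ r ∈ Set.Ioo r₀ r₁, r ≠ b₁ → 0 < ρ r)
    (hρ : ∀ r ∈ Set.Ioo r₀ r₁, r ≠ b₁ → HasDerivAt ρ (ρ' r) r)
    (hρm' : Filter.Tendsto ρ (nhdsWithin b₁ (Set.Iio b₁)) (nhds ρm))
    (hρp' : Filter.Tendsto ρ (nhdsWithin b₁ (Set.Ioi b₁)) (nhds (b₂ * ρm)))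
    (hu : ∀ r ∈ Set.Ioo r₀ r₁, HasDerivAt u (u' r) r)
    (hucont : ContinuousAt u b₁) (hu'cont : ContinuousAt u' b₁)
    (hrr : ∀ s ∈ Set.Ioo c d ∪ Set.Ioo d e,
      HasDerivAt rr (1 / Real.sqrt (ρ (rr s))) s)
    (hmap₁ : ∀ s ∈ Set.Ioo c d, rr s ∈ Set.Ioo r₀ b₁)
    (hmap₂ : ∀ s ∈ Set.Ioo d e, rr s ∈ Set.Ioo b₁ r₁)
    (hrrm : Filter.Tendsto rr (nhdsWithin d (Set.Iio d)) (nhds b₁))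
    (hrrp : Filter.Tendsto rr (nhdsWithin d (Set.Ioi d)) (nhds b₁))
    (hgm : Filter.Tendsto g (nhdsWithin d (Set.Iio d)) (nhds gdm))
    (hgp : Filter.Tendsto g (nhdsWithin d (Set.Ioi d)) (nhds gdp)) :
    Filter.Tendsto (fun s => (ρ (rr s)) ^ ((1 : ℝ) / 4) * u (rr s))
        (nhdsWithin d (Set.Iio d)) (nhds (ρm ^ ((1 : ℝ) / 4) * u b₁)) ∧
    Filter.Tendsto (fun s => (ρ (rr s)) ^ ((1 : ℝ) / 4) * u (rr s))
        (nhdsWithin d (Set.Ioi d))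
        (nhds (b₂ ^ ((1 : ℝ) / 4) * (ρm ^ ((1 : ℝ) / 4) * u b₁))) ∧
    Filter.Tendsto (fun s =>
        deriv (fun x => (ρ (rr x)) ^ ((1 : ℝ) / 4) * u (rr x)) s
          - ((1 / 4) * ρ' (rr s) / (ρ (rr s)) ^ ((3 : ℝ) / 2) + g s) *
              ((ρ (rr s)) ^ ((1 : ℝ) / 4) * u (rr s)))
        (nhdsWithin d (Set.Iio d))
        (nhds (ρm ^ (-(1 : ℝ) / 4) * u' b₁ - gdm * (ρm ^ ((1 : ℝ) / 4) * u b₁))) ∧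
    Filter.Tendsto (fun s =>
        deriv (fun x => (ρ (rr x)) ^ ((1 : ℝ) / 4) * u (rr x)) s
          - ((1 / 4) * ρ' (rr s) / (ρ (rr s)) ^ ((3 : ℝ) / 2) + g s) *
              ((ρ (rr s)) ^ ((1 : ℝ) / 4) * u (rr s)))
        (nhdsWithin d (Set.Ioi d))
        (nhds ((b₂ ^ ((1 : ℝ) / 4))⁻¹ *
            (ρm ^ (-(1 : ℝ) / 4) * u' b₁ - gdm * (ρm ^ ((1 : ℝ) / 4) * u b₁))
          + (gdm * b₂ ^ (-(1 : ℝ) / 4) - gdp * b₂ ^ ((1 : ℝ) / 4)) *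
              (ρm ^ ((1 : ℝ) / 4) * u b₁))) ∧
    (gdm * b₂ ^ (-(1 : ℝ) / 4) - gdp * b₂ ^ ((1 : ℝ) / 4) = 0 ↔
      gdm = Real.sqrt b₂ * gdp) := by
  have hIio : Ioo c d ∈ 𝓝[<] d := Ioo_mem_nhdsLT hc
  have hIoi : Ioo d e ∈ 𝓝[>] d := Ioo_mem_nhdsGT he
  have hrr_left : Tendsto rr (𝓝[<] d) (𝓝[<] b₁) :=
    tendsto_nhdsWithin_iff.mpr ⟨hrrm, eventually_of_mem hIio fun s hs => (hmap₁ s hs).2⟩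
  have hrr_right : Tendsto rr (𝓝[>] d) (𝓝[>] b₁) :=
    tendsto_nhdsWithin_iff.mpr ⟨hrrp, eventually_of_mem hIoi fun s hs => (hmap₂ s hs).1⟩
  have hquasi : ∀ s ∈ Ioo c d ∪ Ioo d e,
      deriv (fun x => ρ (rr x) ^ ((1 : ℝ) / 4) * u (rr x)) s
        - ((1 / 4) * ρ' (rr s) / ρ (rr s) ^ ((3 : ℝ) / 2) + g s)
          * (ρ (rr s) ^ ((1 : ℝ) / 4) * u (rr s))
      = ρ (rr s) ^ (-(1 : ℝ) / 4) * u' (rr s) - g s * (ρ (rr s) ^ ((1 : ℝ) / 4) * u (rr s)) := by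
    intro s hs
    obtain ⟨hr, hne⟩ : rr s ∈ Ioo r₀ r₁ ∧ rr s ≠ b₁ := by
      rcases hs with hs | hs
      · obtain ⟨h₀, h₁⟩ := hmap₁ s hs
        exact ⟨⟨h₀, h₁.trans hr₁⟩, h₁.ne⟩
      · obtain ⟨h₀, h₁⟩ := hmap₂ s hs
        exact ⟨⟨hr₀.trans h₀, h₁⟩, h₀.ne'⟩
    exact deriv_liouville_sub_sigma_mul (hρpos _ hr hne) (hρ _ hr hne) (hu _ hr) (hrr s hs)
  have hρ_left := hρm'.comp hrr_left
  have hρ_right := hρp'.comp hrr_right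
  refine ⟨(hρ_left.rpow_const (Or.inr (by norm_num))).mul (hucont.tendsto.comp hrrm), ?_, ?_, ?_,
    liouville_jump_coeff_eq_zero_iff hb₂⟩
  · rw [← mul_assoc, ← Real.mul_rpow hb₂.le hρm.le]
    exact (hρ_right.rpow_const (Or.inr (by norm_num))).mul (hucont.tendsto.comp hrrp)
  · refine (tendsto_liouville_quasiDeriv hρm.ne' hρ_left (hu'cont.tendsto.comp hrrm)
      (hucont.tendsto.comp hrrm) hgm).congr' ?_
    filter_upwards [hIio] with s hs using (hquasi s (Or.inl hs)).symm
  · rw [← liouville_jump_quasiDeriv hb₂ hρm]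
    refine (tendsto_liouville_quasiDeriv (mul_pos hb₂ hρm).ne' hρ_right
      (hu'cont.tendsto.comp hrrp) (hucont.tendsto.comp hrrp) hgp).congr' ?_
    filter_upwards [hIoi] with s hs using (hquasi s (Or.inr hs)).symm

/-- Jump conditions under the Liouville transformation: with `z(x) = ρ(r)^{1/4}u(r)`,
`z^{[1]} = z' − σz`, `d₁ = b₂^{1/4}`, `d₂ = g(d−)b₂^{−1/4} − g(d+)b₂^{1/4}`, one has
`z(d+) = d₁ z(d−)`, `z^{[1]}(d+) = d₁⁻¹ z^{[1]}(d−) + d₂ z(d−)`, and `d₂ = 0` iff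
`g(d−) = b₂^{1/2} g(d+)`. -/
theorem stmt_8 (b₁ b₂ d c e r₀ r₁ ρm gdm gdp : ℝ) (ρ ρ' u u' g rr : ℝ → ℝ)
    (hb₂ : 0 < b₂) (hb₂' : b₂ ≠ 1) (hr₀ : r₀ < b₁) (hr₁ : b₁ < r₁)
    (hc : c < d) (he : d < e) (hρm : 0 < ρm)
    (hρpos : ∀ r ∈ Set.Ioo r₀ r₁, r ≠ b₁ → 0 < ρ r)
    (hρ : ∀ r ∈ Set.Ioo r₀ r₁, r ≠ b₁ → HasDerivAt ρ (ρ' r) r)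
    (hρm' : Filter.Tendsto ρ (nhdsWithin b₁ (Set.Iio b₁)) (nhds ρm))
    (hρp' : Filter.Tendsto ρ (nhdsWithin b₁ (Set.Ioi b₁)) (nhds (b₂ * ρm)))
    (hu : ∀ r ∈ Set.Ioo r₀ r₁, HasDerivAt u (u' r) r)
    (hucont : ContinuousAt u b₁) (hu'cont : ContinuousAt u' b₁)
    (hrr : ∀ s ∈ Set.Ioo c d ∪ Set.Ioo d e,
      HasDerivAt rr (1 / Real.sqrt (ρ (rr s))) s)
    (hmap₁ : ∀ s ∈ Set.Ioo c d, rr s ∈ Set.Ioo r₀ b₁)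
    (hmap₂ : ∀ s ∈ Set.Ioo d e, rr s ∈ Set.Ioo b₁ r₁)
    (hrrm : Filter.Tendsto rr (nhdsWithin d (Set.Iio d)) (nhds b₁))
    (hrrp : Filter.Tendsto rr (nhdsWithin d (Set.Ioi d)) (nhds b₁))
    (hg : ∀ s ∈ Set.Ioo c d ∪ Set.Ioo d e,
      HasDerivAt g ((1 / 16) * (ρ' (rr s)) ^ 2 / (ρ (rr s)) ^ 3) s)
    (hgm : Filter.Tendsto g (nhdsWithin d (Set.Iio d)) (nhds gdm))
    (hgp : Filter.Tendsto g (nhdsWithin d (Set.Ioi d)) (nhds gdp)) :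
    Filter.Tendsto (fun s => (ρ (rr s)) ^ ((1 : ℝ) / 4) * u (rr s))
        (nhdsWithin d (Set.Iio d)) (nhds (ρm ^ ((1 : ℝ) / 4) * u b₁)) ∧
    Filter.Tendsto (fun s => (ρ (rr s)) ^ ((1 : ℝ) / 4) * u (rr s))
        (nhdsWithin d (Set.Ioi d))
        (nhds (b₂ ^ ((1 : ℝ) / 4) * (ρm ^ ((1 : ℝ) / 4) * u b₁))) ∧
    Filter.Tendsto (fun s =>
        deriv (fun x => (ρ (rr x)) ^ ((1 : ℝ) / 4) * u (rr x)) s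
          - ((1 / 4) * ρ' (rr s) / (ρ (rr s)) ^ ((3 : ℝ) / 2) + g s) *
              ((ρ (rr s)) ^ ((1 : ℝ) / 4) * u (rr s)))
        (nhdsWithin d (Set.Iio d))
        (nhds (ρm ^ (-(1 : ℝ) / 4) * u' b₁ - gdm * (ρm ^ ((1 : ℝ) / 4) * u b₁))) ∧
    Filter.Tendsto (fun s =>
        deriv (fun x => (ρ (rr x)) ^ ((1 : ℝ) / 4) * u (rr x)) s
          - ((1 / 4) * ρ' (rr s) / (ρ (rr s)) ^ ((3 : ℝ) / 2) + g s) *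
              ((ρ (rr s)) ^ ((1 : ℝ) / 4) * u (rr s)))
        (nhdsWithin d (Set.Ioi d))
        (nhds ((b₂ ^ ((1 : ℝ) / 4))⁻¹ *
            (ρm ^ (-(1 : ℝ) / 4) * u' b₁ - gdm * (ρm ^ ((1 : ℝ) / 4) * u b₁))
          + (gdm * b₂ ^ (-(1 : ℝ) / 4) - gdp * b₂ ^ ((1 : ℝ) / 4)) *
              (ρm ^ ((1 : ℝ) / 4) * u b₁))) ∧
    (gdm * b₂ ^ (-(1 : ℝ) / 4) - gdp * b₂ ^ ((1 : ℝ) / 4) = 0 ↔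
      gdm = Real.sqrt b₂ * gdp) :=
  stmt_8_general b₁ b₂ d c e r₀ r₁ ρm gdm gdp ρ ρ' u u' g rr hb₂ hr₀ hr₁ hc he hρm hρpos hρ hρm'
    hρp' hu hucont hu'cont hrr hmap₁ hmap₂ hrrm hrrp hgm hgp
end

section
/- Let f be continuous on [y,a]. Then as |λ| → ∞ in the sector Λ_δ = {λ ∈ ℂ : δ < arg λ < π − δ}, with √λ the principal branch, e^{i√λ(a−y)} ∫_y^a f(t) e^{−i√λ(t−y)} dt + f(a)/(i√λ) = o(1/|√λ|). -/
open intervalIntegral in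
lemma helperB {k b a : ℝ} (hk : 0 < k) (hba : b ≤ a) :
    ∫ t in b..a, Real.exp (-k * (a - t)) ≤ 1 / k := by
  have hD : ∀ t : ℝ, HasDerivAt (fun t => Real.exp (-k * (a - t)) / k)
      (Real.exp (-k * (a - t))) t := by
    intro t
    have h1 : HasDerivAt (fun t : ℝ => -k * (a - t)) k t := by
      simpa using ((hasDerivAt_id t).const_sub a).const_mul (-k)
    simpa [mul_div_cancel_right₀ _ hk.ne'] using (h1.exp).div_const k
  have hcont : IntervalIntegrable (fun t => Real.exp (-k * (a - t))) MeasureTheory.volume b a :=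
    (Real.continuous_exp.comp (by continuity)).intervalIntegrable _ _
  rw [integral_eq_sub_of_hasDerivAt (fun t _ => hD t) hcont]
  have h2 : (0:ℝ) ≤ Real.exp (-k * (a - b)) / k := by positivity
  have h3 : Real.exp (-k * (a - a)) / k = 1 / k := by simp
  linarith [h3]

open Complex in
lemma helperA {c : ℂ} (hc : c ≠ 0) (y a : ℝ) :
    (∫ t in y..a, Complex.exp (c * ((a:ℂ) - (t:ℂ))))
      = (Complex.exp (c * ((a:ℂ) - (y:ℂ))) - 1) / c := by
  have h1 : ∀ t : ℝ, Complex.exp (c * ((a:ℂ) - (t:ℂ)))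
      = Complex.exp (c * a) * Complex.exp ((-c) * t) := by
    intro t; rw [← Complex.exp_add]; congr 1; ring
  simp_rw [h1]
  rw [intervalIntegral.integral_const_mul, integral_exp_mul_complex (neg_ne_zero.mpr hc)]
  have e1 : Complex.exp (c * a) * Complex.exp (-c * y) = Complex.exp (c * ((a:ℂ) - (y:ℂ))) := by
    rw [← Complex.exp_add]; congr 1; ring
  have e2 : Complex.exp (c * a) * Complex.exp (-c * a) = 1 := by
    rw [← Complex.exp_add]; ring_nf; exact Complex.exp_zero
  have key : Complex.exp (c * a) * ((Complex.exp (-c * a) - Complex.exp (-c * y)) / (-c))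
      = (Complex.exp (c * a) * Complex.exp (-c * y) - Complex.exp (c * a) * Complex.exp (-c * a)) / c := by
    rw [div_neg, mul_neg, ← mul_div_assoc, mul_sub, ← neg_div, neg_sub]
  rw [key, e1, e2]

set_option maxHeartbeats 1000000 in
/-- Boundary asymptotics: for `f` continuous on `[y,a]`, as `|λ| → ∞` in the sector
`Λ_δ = {δ < arg λ < π − δ}` (principal `√λ`),
`e^{i√λ(a−y)} ∫_y^a f(t) e^{−i√λ(t−y)} dt + f(a)/(i√λ) = o(1/|√λ|)`. -/
theorem stmt_10 (y a : ℝ) (hya : y < a) (δ : ℝ) (hδ : δ ∈ Set.Ioo 0 (Real.pi / 2))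
    (f : ℝ → ℂ) (hf : ContinuousOn f (Set.Icc y a)) :
    ∀ ε > (0 : ℝ), ∃ R > (0 : ℝ), ∀ lam : ℂ,
      δ < lam.arg → lam.arg < Real.pi - δ → R ≤ ‖lam‖ →
      ‖Complex.exp (Complex.I * lam ^ ((1 : ℂ) / 2) * ((a : ℂ) - (y : ℂ))) *
            (∫ t in y..a, f t *
              Complex.exp (-(Complex.I * lam ^ ((1 : ℂ) / 2) * ((t : ℂ) - (y : ℂ)))))
          + f a / (Complex.I * lam ^ ((1 : ℂ) / 2))‖
        ≤ ε / ‖lam ^ ((1 : ℂ) / 2)‖ := by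
  obtain ⟨hδ0, hδπ⟩ := hδ
  have hπ := Real.pi_pos
  intro ε hε
  obtain ⟨M0, hM0⟩ := (isCompact_Icc).exists_bound_of_continuousOn hf
  set M : ℝ := max M0 0 with hMdef
  have hM : ∀ x ∈ Set.Icc y a, ‖f x‖ ≤ M := fun x hx => (hM0 x hx).trans (le_max_left _ _)
  have hMnn : 0 ≤ M := le_max_right _ _
  set c := Real.sin (δ / 2) with hcdef
  have hc : 0 < c := Real.sin_pos_of_pos_of_lt_pi (by linarith) (by linarith)
  -- continuity at a
  have hca := hf a ⟨hya.le, le_refl a⟩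
  rw [Metric.continuousWithinAt_iff] at hca
  obtain ⟨η, hη0, hη⟩ := hca (ε * c / 4) (by positivity)
  set m := min η (a - y) with hmdef
  have hm0 : 0 < m := lt_min hη0 (by linarith)
  set K := 2 * M * (a - y) + M + 1 with hKdef
  have hK : 0 < K := by nlinarith
  have htend := tendsto_rpow_mul_exp_neg_mul_atTop_nhds_zero 1 (c * m) (by positivity)
  rw [Metric.tendsto_atTop] at htend
  obtain ⟨X, hX⟩ := htend (ε / (4 * K)) (by positivity)
  set X' := max X 1 with hX'def
  have hX'1 : (1:ℝ) ≤ X' := le_max_right _ _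
  have hX'pos : (0:ℝ) < X' := lt_of_lt_of_le one_pos hX'1
  refine ⟨max (X' ^ 2) 1, lt_of_lt_of_le one_pos (le_max_right _ _), ?_⟩
  intro lam harg1 harg2 habs
  have hR1 : (1:ℝ) ≤ ‖lam‖ := le_trans (le_max_right _ _) habs
  have hlam0 : lam ≠ 0 := by
    intro h; rw [h] at hR1; simp at hR1; linarith
  set μ := lam ^ ((1 : ℂ) / 2) with hμdef
  have hμexp : μ = Complex.exp (Complex.log lam * ((1:ℂ) / 2)) :=
    Complex.cpow_def_of_ne_zero hlam0 _
  have hre : (Complex.log lam * ((1:ℂ) / 2)).re = Real.log (‖lam‖) / 2 := by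
    simp [Complex.mul_re, Complex.log_re, Complex.log_im, Complex.div_re]
    ring
  have him : (Complex.log lam * ((1:ℂ) / 2)).im = lam.arg / 2 := by
    simp [Complex.mul_im, Complex.log_re, Complex.log_im, Complex.div_re]
    ring
  have habsμ : ‖μ‖ = Real.exp ((Complex.log lam * ((1:ℂ) / 2)).re) := by
    rw [hμexp, Complex.norm_exp]
  have hμim : μ.im = Real.exp ((Complex.log lam * ((1:ℂ) / 2)).re) * Real.sin (lam.arg / 2) := by
    rw [hμexp, Complex.exp_im, him]
  -- sine lower bound
  have hargπ : lam.arg < Real.pi := by linarith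
  have hsin : c ≤ Real.sin (lam.arg / 2) := by
    apply le_of_lt
    apply Real.strictMonoOn_sin ⟨by linarith, by linarith⟩ ⟨by linarith, by linarith⟩
    linarith
  have himge : c * ‖μ‖ ≤ μ.im := by
    rw [habsμ, hμim]
    have := Real.exp_pos ((Complex.log lam * ((1:ℂ) / 2)).re)
    nlinarith
  -- abs μ lower bounds
  have habsval : ‖μ‖ = ‖lam‖ ^ ((1:ℝ) / 2) := by
    rw [hμdef, Complex.norm_cpow_of_ne_zero hlam0]
    norm_num
  have hμgeX' : X' ≤ ‖μ‖ := by
    have h1 : (X' ^ 2 : ℝ) ≤ ‖lam‖ := le_trans (le_max_left _ _) habs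
    have h2 : ((X' ^ 2 : ℝ)) ^ ((1:ℝ)/2) ≤ ‖lam‖ ^ ((1:ℝ)/2) :=
      Real.rpow_le_rpow (by positivity) h1 (by norm_num)
    have h3 : ((X' ^ 2 : ℝ)) ^ ((1:ℝ)/2) = X' := by
      rw [← Real.rpow_natCast X' 2, ← Real.rpow_mul hX'pos.le]
      norm_num
    rw [habsval]; rw [h3] at h2; exact h2
  have hμ1 : (1:ℝ) ≤ ‖μ‖ := le_trans hX'1 hμgeX'
  have hμpos : (0:ℝ) < ‖μ‖ := lt_of_lt_of_le one_pos hμ1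
  have hμ0 : μ ≠ 0 := by
    intro h; rw [h] at hμpos; simp at hμpos
  have hIμ : Complex.I * μ ≠ 0 := mul_ne_zero Complex.I_ne_zero hμ0
  set k := c * ‖μ‖ with hkdef
  have hk : 0 < k := mul_pos hc hμpos
  -- exponential smallness
  have hXapp := hX (‖μ‖) (le_trans (le_max_left _ _) hμgeX')
  rw [Real.dist_eq, sub_zero, Real.rpow_one] at hXapp
  have hXnn : (0:ℝ) ≤ ‖μ‖ * Real.exp (-(c * m) * ‖μ‖) := by positivity
  rw [abs_of_nonneg hXnn] at hXapp
  have hexp1 : Real.exp (-k * m) < ε / (4 * K * ‖μ‖) := by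
    have harg : -(c * m) * ‖μ‖ = -k * m := by rw [hkdef]; ring
    rw [harg] at hXapp
    rw [div_mul_eq_div_div]
    rw [lt_div_iff₀ hμpos]
    nlinarith [Real.exp_pos (-k * m)]
  have hsmall : K * Real.exp (-k * m) ≤ ε / (4 * ‖μ‖) := by
    have h1 : K * Real.exp (-k * m) ≤ K * (ε / (4 * K * ‖μ‖)) := by
      apply mul_le_mul_of_nonneg_left hexp1.le hK.le
    have h2 : K * (ε / (4 * K * ‖μ‖)) = ε / (4 * ‖μ‖) := by
      field_simp
    linarith
  -- pointwise exp bound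
  set E : ℝ → ℂ := fun t => Complex.exp (Complex.I * μ * ((a:ℂ) - (t:ℂ))) with hEdef
  have hEbd : ∀ t : ℝ, t ≤ a → ‖E t‖ ≤ Real.exp (-k * (a - t)) := by
    intro t ht
    rw [hEdef]
    simp only []
    rw [Complex.norm_exp]
    apply Real.exp_le_exp.mpr
    have hcast : ((a:ℂ) - (t:ℂ)) = ((a - t : ℝ) : ℂ) := by push_cast; ring
    have hre2 : (Complex.I * μ * ((a:ℂ) - (t:ℂ))).re = -μ.im * (a - t) := by
      rw [hcast]
      simp [Complex.mul_re, Complex.mul_im]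
    rw [hre2]
    have h := mul_le_mul_of_nonneg_right himge (sub_nonneg.mpr ht)
    linarith
  have hEcont : Continuous E := by
    apply Complex.continuous_exp.comp
    continuity
  -- the split point
  set b := max y (a - η) with hbdef
  have hyb : y ≤ b := le_max_left _ _
  have hba : b ≤ a := max_le hya.le (by linarith)
  have hab : a - b = m := by
    rcases le_total y (a - η) with h | h
    · rw [hbdef, max_eq_right h, hmdef, min_eq_left (by linarith)]; ring
    · rw [hbdef, max_eq_left h, hmdef, min_eq_right (by linarith)]
  -- integrand continuity
  set G : ℝ → ℂ := fun t => (f t - f a) * E t with hGdef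
  clear_value M c m K X' μ k b E G
  have hGcont : ContinuousOn G (Set.Icc y a) := by
    rw [hGdef]; exact (hf.sub continuousOn_const).mul hEcont.continuousOn
  have hGint : ∀ u v : ℝ, y ≤ u → v ≤ a → u ≤ v →
      IntervalIntegrable G MeasureTheory.volume u v := by
    intro u v hu hv huv
    apply (hGcont.mono _).intervalIntegrable
    rw [Set.uIcc_of_le huv]
    exact Set.Icc_subset_Icc hu hv
  have hfEcont : ContinuousOn (fun t => f t * E t) (Set.Icc y a) :=
    hf.mul hEcont.continuousOn
  have hfaEint : IntervalIntegrable (fun t => f a * E t) MeasureTheory.volume y a :=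
    (continuous_const.mul hEcont).intervalIntegrable _ _
  -- identity 1
  have hid1 : Complex.exp (Complex.I * μ * ((a:ℂ) - (y:ℂ))) *
      (∫ t in y..a, f t * Complex.exp (-(Complex.I * μ * ((t:ℂ) - (y:ℂ)))))
      = ∫ t in y..a, f t * E t := by
    rw [← intervalIntegral.integral_const_mul]
    apply intervalIntegral.integral_congr
    intro t _
    show Complex.exp (Complex.I * μ * ((a:ℂ) - (y:ℂ))) *
        (f t * Complex.exp (-(Complex.I * μ * ((t:ℂ) - (y:ℂ))))) = f t * E t
    rw [hEdef]
    rw [mul_left_comm, ← Complex.exp_add]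
    congr 2
    ring
  -- identity 2
  have hint2 : (∫ t in y..a, E t) = (Complex.exp (Complex.I * μ * ((a:ℂ) - (y:ℂ))) - 1)
      / (Complex.I * μ) := by
    simp only [hEdef]; exact helperA hIμ y a
  have hid2 : (∫ t in y..a, f t * E t)
      = (∫ t in y..a, G t) + f a * ((Complex.exp (Complex.I * μ * ((a:ℂ) - (y:ℂ))) - 1)
          / (Complex.I * μ)) := by
    have h1 : (∫ t in y..a, f t * E t) = ∫ t in y..a, (G t + f a * E t) := by
      apply intervalIntegral.integral_congr
      intro t _
      rw [hGdef]; ring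
    rw [h1, intervalIntegral.integral_add (hGint y a le_rfl le_rfl hya.le) hfaEint,
      intervalIntegral.integral_const_mul, hint2]
  -- split integral
  have hsplit : (∫ t in y..a, G t) = (∫ t in y..b, G t) + ∫ t in b..a, G t :=
    (intervalIntegral.integral_add_adjacent_intervals (hGint y b le_rfl hba hyb)
      (hGint b a hyb le_rfl hba)).symm
  -- main rewrite of the goal expression
  have hexpr : Complex.exp (Complex.I * μ * ((a:ℂ) - (y:ℂ))) *
      (∫ t in y..a, f t * Complex.exp (-(Complex.I * μ * ((t:ℂ) - (y:ℂ)))))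
      + f a / (Complex.I * μ)
      = (∫ t in y..b, G t) + (∫ t in b..a, G t)
        + f a * Complex.exp (Complex.I * μ * ((a:ℂ) - (y:ℂ))) / (Complex.I * μ) := by
    rw [hid1, hid2, hsplit]
    field_simp
    ring
  rw [hexpr]
  -- estimate I1
  have hI1 : ‖∫ t in y..b, G t‖ ≤ ε / (4 * ‖μ‖) := by
    have hbd : ∀ x ∈ Set.uIoc y b, ‖G x‖ ≤ 2 * M * Real.exp (-k * m) := by
      intro x hx
      rw [Set.uIoc_of_le hyb] at hx
      have hx1 : y < x := hx.1
      have hx2 : x ≤ b := hx.2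
      have hxa : x ≤ a := le_trans hx2 hba
      have hxmem : x ∈ Set.Icc y a := ⟨hx1.le, hxa⟩
      rw [hGdef]
      simp only []
      rw [norm_mul]
      have h1 : ‖f x - f a‖ ≤ 2 * M := by
        calc ‖f x - f a‖ ≤ ‖f x‖ + ‖f a‖ := norm_sub_le _ _
        _ ≤ 2 * M := by have := hM x hxmem; have := hM a ⟨hya.le, le_rfl⟩; linarith
      have h2 : ‖E x‖ ≤ Real.exp (-k * m) := by
        refine le_trans (hEbd x hxa) (Real.exp_le_exp.mpr ?_)
        nlinarith [hab, hk]
      calc ‖f x - f a‖ * ‖E x‖ ≤ (2 * M) * Real.exp (-k * m) := by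
            apply mul_le_mul h1 h2 (norm_nonneg _) (by positivity)
      _ = 2 * M * Real.exp (-k * m) := by ring
    have := intervalIntegral.norm_integral_le_of_norm_le_const hbd
    have hbound : 2 * M * Real.exp (-k * m) * |b - y| ≤ ε / (4 * ‖μ‖) := by
      rw [abs_of_nonneg (by linarith)]
      have h1 : 2 * M * Real.exp (-k * m) * (b - y) ≤ 2 * M * (a - y) * Real.exp (-k * m) := by
        nlinarith [mul_nonneg (mul_nonneg hMnn (Real.exp_pos (-k * m)).le)
          (sub_nonneg.mpr hba), Real.exp_pos (-k * m), hMnn]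
      have h2 : 2 * M * (a - y) * Real.exp (-k * m) ≤ K * Real.exp (-k * m) :=
        mul_le_mul_of_nonneg_right (by linarith [mul_nonneg hMnn (by linarith : (0:ℝ) ≤ a - y)])
          (Real.exp_pos (-k * m)).le
      exact le_trans (h1.trans h2) hsmall
    linarith
  -- estimate I2
  have hI2 : ‖∫ t in b..a, G t‖ ≤ ε / (4 * ‖μ‖) := by
    have hintg : IntervalIntegrable (fun t => (ε * c / 4) * Real.exp (-k * (a - t)))
        MeasureTheory.volume b a :=
      (continuous_const.mul (Real.continuous_exp.comp
        (continuous_const.mul (continuous_const.sub continuous_id)))).intervalIntegrable _ _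
    have hae : ∀ᵐ t ∂(MeasureTheory.volume.restrict (Set.uIoc b a)),
        ‖G t‖ ≤ (ε * c / 4) * Real.exp (-k * (a - t)) := by
      filter_upwards [MeasureTheory.ae_restrict_mem measurableSet_uIoc] with t ht
      rw [Set.uIoc_of_le hba] at ht
      have ht1 : b < t := ht.1
      have ht2 : t ≤ a := ht.2
      have htmem : t ∈ Set.Icc y a := ⟨le_trans hyb ht1.le, ht2⟩
      have hdist : dist t a < η := by
        rw [Real.dist_eq, abs_of_nonpos (by linarith)]
        have : a - η ≤ b := by rw [hbdef]; exact le_max_right _ _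
        linarith
      have hsmallf : ‖f t - f a‖ ≤ ε * c / 4 := by
        have := hη htmem hdist
        rw [dist_eq_norm] at this
        linarith
      rw [hGdef]
      simp only []
      rw [norm_mul]
      refine mul_le_mul hsmallf ?_ (norm_nonneg _) (by positivity)
      exact hEbd t ht2
    have h1 := (intervalIntegral.norm_integral_le_of_norm_le hba
      ((MeasureTheory.ae_restrict_iff' measurableSet_Ioc).mp (by rwa [Set.uIoc_of_le hba] at hae))
      hintg).trans (le_abs_self _)
    have h2 : (∫ t in b..a, (ε * c / 4) * Real.exp (-k * (a - t)))
        = (ε * c / 4) * ∫ t in b..a, Real.exp (-k * (a - t)) :=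
      intervalIntegral.integral_const_mul _ _
    have h3 : (0:ℝ) ≤ ∫ t in b..a, Real.exp (-k * (a - t)) := by
      apply intervalIntegral.integral_nonneg hba
      intro u _; positivity
    have h4 := helperB hk hba
    have h5 : |∫ t in b..a, (ε * c / 4) * Real.exp (-k * (a - t))| ≤ ε / (4 * ‖μ‖) := by
      rw [h2, abs_of_nonneg (by positivity)]
      have : (ε * c / 4) * (∫ t in b..a, Real.exp (-k * (a - t))) ≤ (ε * c / 4) * (1 / k) := by
        apply mul_le_mul_of_nonneg_left h4 (by positivity)
      have heq : (ε * c / 4) * (1 / k) = ε / (4 * ‖μ‖) := by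
        rw [hkdef]; field_simp
      linarith
    linarith
  -- estimate T
  have hT : ‖f a * Complex.exp (Complex.I * μ * ((a:ℂ) - (y:ℂ))) / (Complex.I * μ)‖
      ≤ ε / (4 * ‖μ‖) := by
    rw [norm_div, norm_mul, norm_mul, Complex.norm_I, one_mul]
    have h1 : ‖Complex.exp (Complex.I * μ * ((a:ℂ) - (y:ℂ)))‖
        ≤ Real.exp (-k * (a - y)) := by
      have h := hEbd y hya.le
      simp only [hEdef] at h
      exact h
    have h2 : Real.exp (-k * (a - y)) ≤ Real.exp (-k * m) := by
      apply Real.exp_le_exp.mpr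
      have hm2 : m ≤ a - y := by rw [hmdef]; exact min_le_right _ _
      have := mul_le_mul_of_nonneg_left hm2 hk.le
      linarith
    have h3 : ‖f a‖ ≤ M := hM a ⟨hya.le, le_rfl⟩
    have h4 : ‖f a‖ * ‖Complex.exp (Complex.I * μ * ((a:ℂ) - (y:ℂ)))‖
        ≤ M * Real.exp (-k * m) := by
      apply mul_le_mul h3 (le_trans h1 h2) (norm_nonneg _) hMnn
    have h5 : M * Real.exp (-k * m) ≤ K * Real.exp (-k * m) :=
      mul_le_mul_of_nonneg_right (by linarith [mul_nonneg hMnn (by linarith : (0:ℝ) ≤ a - y)])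
        (Real.exp_pos (-k * m)).le
    have h6 : ‖f a‖ * ‖Complex.exp (Complex.I * μ * ((a:ℂ) - (y:ℂ)))‖
        / ‖μ‖ ≤ ε / (4 * ‖μ‖) / ‖μ‖ := by
      gcongr
      linarith
    refine le_trans h6 ?_
    rw [div_div]
    apply div_le_div_of_nonneg_left hε.le (by positivity)
    have h7 : 4 * ‖μ‖ * 1 ≤ 4 * ‖μ‖ * ‖μ‖ :=
      mul_le_mul_of_nonneg_left hμ1 (by positivity)
    linarith
  -- combine
  calc ‖(∫ t in y..b, G t) + (∫ t in b..a, G t)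
        + f a * Complex.exp (Complex.I * μ * ((a:ℂ) - (y:ℂ))) / (Complex.I * μ)‖
      ≤ ‖∫ t in y..b, G t‖ + ‖∫ t in b..a, G t‖
        + ‖f a * Complex.exp (Complex.I * μ * ((a:ℂ) - (y:ℂ))) / (Complex.I * μ)‖ := by
        exact norm_add₃_le
    _ ≤ ε / (4 * ‖μ‖) + ε / (4 * ‖μ‖) + ε / (4 * ‖μ‖) := by
        linarith
    _ ≤ ε / ‖μ‖ := by
        have key : ε / (4 * ‖μ‖) = ε / ‖μ‖ / 4 := by
          rw [div_div, mul_comm]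
        have hq : 0 ≤ ε / ‖μ‖ := div_nonneg hε.le hμpos.le
        linarith [key, hq]
end

section
/- Let a > b > 0 and f ∈ L²(0, a−b). Suppose (μ_m)_{m>m₀} are positive reals with √μ_m ∈ ((m−1/2)π/(a−b), (m+1/2)π/(a−b)). Then the sequence ( ∫₀^{a−b} f(t) sin(√μ_m · t) dt )_{m>m₀} belongs to ℓ². -/
set_option maxHeartbeats 1000000
open Real MeasureTheory intervalIntegral
open scoped ENNReal NNReal


lemma aux_integral_cos_linear (c d L : ℝ) (hc : c ≠ 0) :
    ∫ t in (0:ℝ)..L, Real.cos (c * t + d) = (Real.sin (c * L + d) - Real.sin d) / c := by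
  rw [intervalIntegral.integral_comp_mul_add Real.cos hc d]
  simp [integral_cos, div_eq_inv_mul]

lemma aux_cos_nat_mul_pi (k : ℕ) : Real.cos (k * π) = (-1) ^ k := by
  induction k with
  | zero => simp
  | succ n ih => push_cast; rw [add_mul, one_mul, Real.cos_add_pi, ih]; ring

lemma aux_sin_add_nat_mul_pi (x : ℝ) (k : ℕ) : Real.sin (x + k * π) = (-1) ^ k * Real.sin x := by
  rw [Real.sin_add, aux_cos_nat_mul_pi, Real.sin_nat_mul_pi]; ring

lemma aux_hasSum_sin_shift (x y : ℝ) :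
    HasSum (fun j : ℕ => y ^ j / j.factorial * Real.sin (x + j * (π / 2)))
      (Real.sin (x + y)) := by
  have he : HasSum (fun k : ℕ =>
      y ^ (2 * k) / (2 * k).factorial * Real.sin (x + (2 * k : ℕ) * (π / 2)))
      (Real.cos y * Real.sin x) := by
    have h := (Real.hasSum_cos y).mul_right (Real.sin x)
    refine h.congr_fun fun k => ?_
    have h2 : ((2 * k : ℕ) : ℝ) * (π / 2) = (k : ℝ) * π := by push_cast; ring
    rw [h2, aux_sin_add_nat_mul_pi]
    ring
  have ho : HasSum (fun k : ℕ =>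
      y ^ (2 * k + 1) / (2 * k + 1).factorial * Real.sin (x + (2 * k + 1 : ℕ) * (π / 2)))
      (Real.sin y * Real.cos x) := by
    have h := (Real.hasSum_sin y).mul_right (Real.cos x)
    refine h.congr_fun fun k => ?_
    have h2 : x + ((2 * k + 1 : ℕ) : ℝ) * (π / 2) = (x + π / 2) + (k : ℝ) * π := by
      push_cast; ring
    rw [h2, aux_sin_add_nat_mul_pi, Real.sin_add_pi_div_two]
    ring
  have h3 := HasSum.even_add_odd
    (f := fun j : ℕ => y ^ j / j.factorial * Real.sin (x + j * (π / 2))) he ho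
  have h4 : Real.cos y * Real.sin x + Real.sin y * Real.cos x = Real.sin (x + y) := by
    rw [Real.sin_add]; ring
  rwa [h4] at h3

lemma aux_sin_ortho (L : ℝ) (hL : 0 < L) (j : ℕ) (m m' : ℕ) (hm : m ≠ 0) (hm' : m' ≠ 0) :
    (∫ t in (0:ℝ)..L, Real.sin ((m : ℝ) * π / L * t + j * (π / 2)) *
        Real.sin ((m' : ℝ) * π / L * t + j * (π / 2)))
      = if m = m' then L / 2 else 0 := by
  have hLne : L ≠ 0 := ne_of_gt hL
  have hπ : π ≠ 0 := Real.pi_ne_zero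
  set c1 : ℝ := ((m : ℝ) - (m' : ℝ)) * π / L with hc1
  set c2 : ℝ := ((m : ℝ) + (m' : ℝ)) * π / L with hc2
  have prod : ∀ X Y : ℝ, Real.sin X * Real.sin Y
      = 1 / 2 * Real.cos (X - Y) - 1 / 2 * Real.cos (X + Y) := by
    intro X Y; rw [Real.cos_sub, Real.cos_add]; ring
  have key : ∀ t : ℝ, Real.sin ((m : ℝ) * π / L * t + j * (π / 2)) *
      Real.sin ((m' : ℝ) * π / L * t + j * (π / 2))
      = 1 / 2 * Real.cos (c1 * t + 0) - 1 / 2 * Real.cos (c2 * t + j * π) := by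
    intro t
    have e1 : ((m : ℝ) * π / L * t + j * (π / 2)) - ((m' : ℝ) * π / L * t + j * (π / 2))
        = c1 * t + 0 := by rw [hc1]; ring
    have e2 : ((m : ℝ) * π / L * t + j * (π / 2)) + ((m' : ℝ) * π / L * t + j * (π / 2))
        = c2 * t + j * π := by rw [hc2]; ring
    rw [prod, e1, e2]
  rw [intervalIntegral.integral_congr (g := fun t => 1 / 2 * Real.cos (c1 * t + 0) -
      1 / 2 * Real.cos (c2 * t + j * π)) (fun t _ => key t)]
  have i1 : IntervalIntegrable (fun t => 1 / 2 * Real.cos (c1 * t + 0)) volume 0 L :=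
    (Continuous.intervalIntegrable (by fun_prop) _ _)
  have i2 : IntervalIntegrable (fun t => 1 / 2 * Real.cos (c2 * t + j * π)) volume 0 L :=
    (Continuous.intervalIntegrable (by fun_prop) _ _)
  rw [intervalIntegral.integral_sub i1 i2, intervalIntegral.integral_const_mul,
    intervalIntegral.integral_const_mul]
  have hc2ne : c2 ≠ 0 := by
    have h1 : (0 : ℝ) < ((m : ℝ) + (m' : ℝ)) := by
      have : (0 : ℝ) < (m : ℝ) := by exact_mod_cast Nat.pos_of_ne_zero hm
      positivity
    rw [hc2]
    positivity
  have int2 : (∫ t in (0:ℝ)..L, Real.cos (c2 * t + j * π)) = 0 := by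
    rw [aux_integral_cos_linear _ _ _ hc2ne]
    have e3 : c2 * L + j * π = ((m + m' + j : ℕ) : ℝ) * π := by
      rw [hc2]; push_cast; field_simp
    have e4 : (j : ℝ) * π = ((j : ℕ) : ℝ) * π := by norm_num
    rw [e3, e4, Real.sin_nat_mul_pi, Real.sin_nat_mul_pi]
    simp
  rw [int2]
  by_cases h : m = m'
  · subst h
    have hc1z : c1 = 0 := by rw [hc1]; simp
    simp only [hc1z, zero_mul, zero_add, Real.cos_zero]
    rw [intervalIntegral.integral_const]
    simp
    ring
  · have hc1ne : c1 ≠ 0 := by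
      have hne : ((m : ℝ) - (m' : ℝ)) ≠ 0 := by
        intro hcon
        exact h (by exact_mod_cast sub_eq_zero.mp hcon)
      rw [hc1]
      exact div_ne_zero (mul_ne_zero hne hπ) hLne
    have int1 : (∫ t in (0:ℝ)..L, Real.cos (c1 * t + 0)) = 0 := by
      rw [aux_integral_cos_linear _ _ _ hc1ne]
      have e5 : c1 * L + 0 = ((m : ℝ) - m') * π := by
        rw [hc1]; field_simp; ring
      have hz : Real.sin (((m : ℝ) - m') * π) = 0 := by
        have h6 := Real.sin_int_mul_pi ((m : ℤ) - m')
        push_cast at h6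
        exact h6
      rw [e5, hz]
      simp
    rw [int1]
    simp [h]


lemma aux_summable_sq_of_decomp (c : ℕ → ℝ) (v : ℕ → ℕ → ℝ) (r : ℕ → ℝ)
    (hr : Summable r) (hr0 : ∀ j, 0 ≤ r j)
    (hc : ∀ m, HasSum (fun j => v j m) (c m))
    (hv : ∀ j, ∀ N : ℕ, ∑ m ∈ Finset.range N, (v j m) ^ 2 ≤ (r j) ^ 2) :
    Summable fun m => (c m) ^ 2 := by
  apply summable_of_sum_range_le (c := (∑' j, r j) ^ 2) (fun m => sq_nonneg _)
  intro N
  let E := EuclideanSpace ℝ (Fin N)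
  let w : ℕ → E := fun j => (WithLp.equiv 2 (Fin N → ℝ)).symm (fun i => v j i)
  have hwnorm : ∀ j, ‖w j‖ ≤ r j := by
    intro j
    rw [EuclideanSpace.norm_eq]
    have h1 : ∑ i : Fin N, ‖v j (i : ℕ)‖ ^ 2 ≤ (r j) ^ 2 := by
      calc ∑ i : Fin N, ‖v j (i : ℕ)‖ ^ 2 = ∑ m ∈ Finset.range N, (v j m) ^ 2 := by
            rw [Finset.sum_range fun m => (v j m) ^ 2]
            exact Finset.sum_congr rfl fun i _ => by rw [Real.norm_eq_abs, sq_abs]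
        _ ≤ (r j) ^ 2 := hv j N
    calc Real.sqrt (∑ i : Fin N, ‖(w j) i‖ ^ 2) ≤ Real.sqrt ((r j) ^ 2) :=
          Real.sqrt_le_sqrt h1
      _ = r j := by rw [Real.sqrt_sq (hr0 j)]
  have hwsum : Summable w := Summable.of_norm_bounded hr hwnorm
  have hnormsum : Summable fun j => ‖w j‖ :=
    Summable.of_nonneg_of_le (fun j => norm_nonneg _) hwnorm hr
  have hcoord : ∀ i : Fin N, (∑' j, w j) i = c i := by
    intro i
    have h2 := (EuclideanSpace.proj (𝕜 := ℝ) i).hasSum hwsum.hasSum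
    have h3 : HasSum (fun j => v j (i : ℕ)) ((∑' j, w j) i) := h2
    exact h3.unique (hc i)
  have hnorm2 : ‖∑' j, w j‖ ≤ ∑' j, r j :=
    le_trans (norm_tsum_le_tsum_norm hnormsum) (Summable.tsum_le_tsum hwnorm hnormsum hr)
  calc ∑ m ∈ Finset.range N, (c m) ^ 2 = ∑ i : Fin N, (c (i : ℕ)) ^ 2 :=
        (Finset.sum_range fun m => (c m) ^ 2)
    _ = ∑ i : Fin N, ‖(∑' j, w j) i‖ ^ 2 := by
        refine Finset.sum_congr rfl fun i _ => ?_
        rw [hcoord i, Real.norm_eq_abs, sq_abs]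
    _ = ‖∑' j, w j‖ ^ 2 := by
        rw [EuclideanSpace.norm_eq, Real.sq_sqrt]
        positivity
    _ ≤ (∑' j, r j) ^ 2 := by
        apply pow_le_pow_left₀ (norm_nonneg _) hnorm2

lemma aux_bessel (L : ℝ) (hL : 0 < L) (j n₀ : ℕ) (g : ℝ → ℝ)
    (hg : MeasureTheory.MemLp g 2 (MeasureTheory.volume.restrict (Set.Ioo (0:ℝ) L))) (N : ℕ) :
    ∑ m ∈ Finset.range N,
      (∫ t in Set.Ioo (0:ℝ) L, g t *
        Real.sin (((m + n₀ + 1 : ℕ) : ℝ) * π / L * t + j * (π / 2))) ^ 2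
      ≤ (L / 2) *
        ((MeasureTheory.eLpNorm g 2 (MeasureTheory.volume.restrict (Set.Ioo (0:ℝ) L))).toReal) ^ 2 := by
  set ν := MeasureTheory.volume.restrict (Set.Ioo (0:ℝ) L) with hν
  have hLne : L ≠ 0 := ne_of_gt hL
  haveI : IsFiniteMeasure ν := by
    constructor
    rw [hν, Measure.restrict_apply_univ, Real.volume_Ioo]
    exact ENNReal.ofReal_lt_top
  set q : ℝ := Real.sqrt (2 / L) with hq
  have hq0 : 0 ≤ q := Real.sqrt_nonneg _
  have hqq : q * q = 2 / L := Real.mul_self_sqrt (by positivity)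
  set φ : ℕ → ℝ → ℝ := fun m t => q * Real.sin (((m + n₀ + 1 : ℕ) : ℝ) * π / L * t + j * (π / 2))
    with hφ
  have hφcont : ∀ m, Continuous (φ m) := by
    intro m; apply continuous_const.mul; fun_prop
  have hφmem : ∀ m, MemLp (φ m) 2 ν := by
    intro m
    refine MemLp.of_bound (hφcont m).aestronglyMeasurable q ?_
    filter_upwards with t
    rw [hφ]
    simp only [Real.norm_eq_abs, abs_mul, abs_of_nonneg hq0]
    nth_rewrite 2 [show q = q * 1 by ring]
    exact mul_le_mul_of_nonneg_left (Real.abs_sin_le_one _) hq0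
  set e : ℕ → MeasureTheory.Lp ℝ 2 ν := fun m => ((hφmem m).toLp (φ m)) with he
  -- integrals over ν equal interval integrals
  have hset : ∀ F : ℝ → ℝ, (∫ t, F t ∂ν) = ∫ t in (0:ℝ)..L, F t := by
    intro F
    rw [intervalIntegral.integral_of_le hL.le, MeasureTheory.integral_Ioc_eq_integral_Ioo, hν]
  have hinner : ∀ (m : ℕ) (G : MeasureTheory.Lp ℝ 2 ν) (gf : ℝ → ℝ)
      (hgf : MemLp gf 2 ν), G = hgf.toLp gf →
      (inner ℝ (e m) G : ℝ) = ∫ t, φ m t * gf t ∂ν := by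
    intro m G gf hgf hG
    rw [MeasureTheory.L2.inner_def]
    apply MeasureTheory.integral_congr_ae
    filter_upwards [(hφmem m).coeFn_toLp, hG ▸ hgf.coeFn_toLp] with t h1 h2
    rw [h1, h2, RCLike.inner_apply, conj_trivial, mul_comm]
  have hortho : Orthonormal ℝ e := by
    rw [orthonormal_iff_ite]
    intro m m'
    rw [hinner m (e m') (φ m') (hφmem m') rfl, hset]
    have : ∀ t, φ m t * φ m' t = (2 / L) *
        (Real.sin (((m + n₀ + 1 : ℕ) : ℝ) * π / L * t + j * (π / 2)) *
         Real.sin (((m' + n₀ + 1 : ℕ) : ℝ) * π / L * t + j * (π / 2))) := by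
      intro t; rw [hφ]; simp only []; rw [← hqq]; ring
    rw [intervalIntegral.integral_congr (g := fun t => (2 / L) *
        (Real.sin (((m + n₀ + 1 : ℕ) : ℝ) * π / L * t + j * (π / 2)) *
         Real.sin (((m' + n₀ + 1 : ℕ) : ℝ) * π / L * t + j * (π / 2)))) (fun t _ => this t),
      intervalIntegral.integral_const_mul,
      aux_sin_ortho L hL j (m + n₀ + 1) (m' + n₀ + 1) (Nat.succ_ne_zero _) (Nat.succ_ne_zero _)]
    by_cases h : m = m'
    · simp only [h, if_pos rfl, if_pos (rfl : m' + n₀ + 1 = m' + n₀ + 1)]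
      simp only [ite_true]
      field_simp
    · have h2 : ¬(m + n₀ + 1 = m' + n₀ + 1) := by omega
      simp [h, h2]
  have hbessel := hortho.sum_inner_products_le (hg.toLp g) (s := Finset.range N)
  have hval : ∀ m, (inner ℝ (e m) (hg.toLp g) : ℝ)
      = q * ∫ t in Set.Ioo (0:ℝ) L, g t *
          Real.sin (((m + n₀ + 1 : ℕ) : ℝ) * π / L * t + j * (π / 2)) := by
    intro m
    rw [hinner m _ g hg rfl]
    rw [show (∫ t, φ m t * g t ∂ν) = ∫ t, q * (g t *
        Real.sin (((m + n₀ + 1 : ℕ) : ℝ) * π / L * t + j * (π / 2))) ∂ν from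
      MeasureTheory.integral_congr_ae (Filter.Eventually.of_forall fun t => by rw [hφ]; ring)]
    rw [MeasureTheory.integral_const_mul]
  have hGnorm : ‖hg.toLp g‖ = (MeasureTheory.eLpNorm g 2 ν).toReal := Lp.norm_toLp g hg
  rw [hGnorm] at hbessel
  -- now convert
  have hconv : ∀ m, ‖(inner ℝ (e m) (hg.toLp g) : ℝ)‖ ^ 2 = (2 / L) *
      (∫ t in Set.Ioo (0:ℝ) L, g t *
        Real.sin (((m + n₀ + 1 : ℕ) : ℝ) * π / L * t + j * (π / 2))) ^ 2 := by
    intro m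
    rw [Real.norm_eq_abs, sq_abs, hval, mul_pow, ← hqq]
    ring
  rw [Finset.sum_congr rfl (fun m _ => hconv m)] at hbessel
  rw [← Finset.mul_sum] at hbessel
  have h2L : (0:ℝ) < 2 / L := by positivity
  calc ∑ m ∈ Finset.range N, (∫ t in Set.Ioo (0:ℝ) L, g t *
        Real.sin (((m + n₀ + 1 : ℕ) : ℝ) * π / L * t + j * (π / 2))) ^ 2
      = (L / 2) * ((2 / L) * ∑ m ∈ Finset.range N, (∫ t in Set.Ioo (0:ℝ) L, g t *
        Real.sin (((m + n₀ + 1 : ℕ) : ℝ) * π / L * t + j * (π / 2))) ^ 2) := by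
        rw [← mul_assoc, show (L / 2) * (2 / L) = (1:ℝ) by field_simp, one_mul]
    _ ≤ (L / 2) * ((MeasureTheory.eLpNorm g 2 ν).toReal) ^ 2 := by
        apply mul_le_mul_of_nonneg_left hbessel (by positivity)

lemma aux_main (L : ℝ) (hL : 0 < L) (m₀ : ℕ) (f : ℝ → ℝ) (μ : ℕ → ℝ)
    (hf : MeasureTheory.MemLp f 2 (MeasureTheory.volume.restrict (Set.Ioo (0:ℝ) L)))
    (hμ : ∀ m : ℕ, |Real.sqrt (μ (m + m₀ + 1)) - ((m + m₀ + 1 : ℕ) : ℝ) * π / L|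
      ≤ π / (2 * L)) :
    Summable fun m : ℕ =>
      (∫ t in (0:ℝ)..L, f t * Real.sin (Real.sqrt (μ (m + m₀ + 1)) * t)) ^ 2 := by
  have hLne : L ≠ 0 := ne_of_gt hL
  haveI : IsFiniteMeasure (MeasureTheory.volume.restrict (Set.Ioo (0:ℝ) L)) := by
    constructor
    rw [Measure.restrict_apply_univ, Real.volume_Ioo]
    exact ENNReal.ofReal_lt_top
  set Cf : ℝ := (MeasureTheory.eLpNorm f 2
    (MeasureTheory.volume.restrict (Set.Ioo (0:ℝ) L))).toReal with hCf
  have hCf0 : 0 ≤ Cf := ENNReal.toReal_nonneg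
  set δ : ℕ → ℝ := fun m =>
    Real.sqrt (μ (m + m₀ + 1)) - ((m + m₀ + 1 : ℕ) : ℝ) * π / L with hδdef
  have hδ : ∀ m, |δ m| ≤ π / (2 * L) := hμ
  set g : ℕ → ℝ → ℝ := fun j t => t ^ j * f t with hgdef
  have hgmeas : ∀ j, MeasureTheory.AEStronglyMeasurable (g j)
      (MeasureTheory.volume.restrict (Set.Ioo (0:ℝ) L)) := fun j =>
    ((continuous_pow j).aestronglyMeasurable).mul hf.1
  have hgmem : ∀ j, MeasureTheory.MemLp (g j) 2
      (MeasureTheory.volume.restrict (Set.Ioo (0:ℝ) L)) := by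
    intro j
    refine hf.of_le_mul (c := L ^ j) (hgmeas j) ?_
    filter_upwards [MeasureTheory.ae_restrict_mem measurableSet_Ioo] with t ht
    simp only [hgdef, Real.norm_eq_abs, abs_mul, abs_pow]
    have h1 : |t| ≤ L := by rw [abs_of_pos ht.1]; exact le_of_lt ht.2
    have h2 : |t| ^ j ≤ L ^ j := pow_le_pow_left₀ (abs_nonneg t) h1 j
    exact mul_le_mul_of_nonneg_right h2 (abs_nonneg _)
  set I : ℕ → ℕ → ℝ := fun j m => ∫ t in Set.Ioo (0:ℝ) L,
    g j t * Real.sin (((m + m₀ + 1 : ℕ) : ℝ) * π / L * t + j * (π / 2)) with hIdef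
  set v : ℕ → ℕ → ℝ := fun j m => δ m ^ j / j.factorial * I j m with hvdef
  set r : ℕ → ℝ := fun j => Real.sqrt (L / 2) * Cf * ((π / 2) ^ j / j.factorial) with hrdef
  have hgnorm : ∀ j, (MeasureTheory.eLpNorm (g j) 2
      (MeasureTheory.volume.restrict (Set.Ioo (0:ℝ) L))).toReal ≤ L ^ j * Cf := by
    intro j
    have h1 : MeasureTheory.eLpNorm (g j) 2 (MeasureTheory.volume.restrict (Set.Ioo (0:ℝ) L))
        ≤ MeasureTheory.eLpNorm ((L ^ j : ℝ) • f) 2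
          (MeasureTheory.volume.restrict (Set.Ioo (0:ℝ) L)) := by
      apply MeasureTheory.eLpNorm_mono_ae
      filter_upwards [MeasureTheory.ae_restrict_mem measurableSet_Ioo] with t ht
      simp only [hgdef, Pi.smul_apply, smul_eq_mul, Real.norm_eq_abs, abs_mul, abs_pow]
      have h1 : |t| ≤ L := by rw [abs_of_pos ht.1]; exact le_of_lt ht.2
      have h2 : |t| ^ j ≤ |L| ^ j := by
        rw [abs_of_pos hL]; exact pow_le_pow_left₀ (abs_nonneg t) h1 j
      exact mul_le_mul_of_nonneg_right h2 (abs_nonneg _)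
    have h2 : MeasureTheory.eLpNorm ((L ^ j : ℝ) • f) 2
        (MeasureTheory.volume.restrict (Set.Ioo (0:ℝ) L))
        = (‖(L ^ j : ℝ)‖₊ : ℝ≥0∞) * MeasureTheory.eLpNorm f 2
          (MeasureTheory.volume.restrict (Set.Ioo (0:ℝ) L)) := by
      rw [MeasureTheory.eLpNorm_const_smul]; rfl
    have h3 := ENNReal.toReal_mono
      (ENNReal.mul_ne_top ENNReal.coe_ne_top hf.2.ne)
      (h1.trans_eq h2)
    rw [ENNReal.toReal_mul, ENNReal.coe_toReal, coe_nnnorm, Real.norm_eq_abs,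
      abs_of_nonneg (by positivity : (0:ℝ) ≤ L ^ j)] at h3
    exact h3
  have hr0 : ∀ j, 0 ≤ r j := by
    intro j
    simp only [hrdef]
    have := Real.pi_pos
    positivity
  have hrsum : Summable r := by
    simp only [hrdef]
    exact (Real.summable_pow_div_factorial (π / 2)).mul_left _
  have hv : ∀ j N : ℕ, ∑ m ∈ Finset.range N, (v j m) ^ 2 ≤ (r j) ^ 2 := by
    intro j N
    have key : (π / (2 * L)) ^ j * L ^ j = (π / 2) ^ j := by
      rw [← mul_pow]; congr 1; field_simp
    have hcoef : ∀ m, (v j m) ^ 2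
        ≤ ((π / (2 * L)) ^ j / j.factorial) ^ 2 * (I j m) ^ 2 := by
      intro m
      have habs : |v j m| ≤ (π / (2 * L)) ^ j / j.factorial * |I j m| := by
        simp only [hvdef, abs_mul, abs_div, abs_pow, Nat.abs_cast]
        have hpi := Real.pi_pos
        gcongr
        all_goals first
          | exact hδ m
          | exact abs_nonneg _
          | positivity
      calc (v j m) ^ 2 = |v j m| ^ 2 := (sq_abs _).symm
        _ ≤ ((π / (2 * L)) ^ j / j.factorial * |I j m|) ^ 2 := by
            apply pow_le_pow_left₀ (abs_nonneg _) habs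
        _ = ((π / (2 * L)) ^ j / j.factorial) ^ 2 * (I j m) ^ 2 := by
            rw [mul_pow, sq_abs]
    have hbessel : ∑ m ∈ Finset.range N, (I j m) ^ 2
        ≤ (L / 2) * ((MeasureTheory.eLpNorm (g j) 2
          (MeasureTheory.volume.restrict (Set.Ioo (0:ℝ) L))).toReal) ^ 2 := by
      simp only [hIdef]
      exact aux_bessel L hL j m₀ (g j) (hgmem j) N
    have hbessel2 : ∑ m ∈ Finset.range N, (I j m) ^ 2 ≤ (L / 2) * (L ^ j * Cf) ^ 2 := by
      refine le_trans hbessel ?_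
      apply mul_le_mul_of_nonneg_left _ (by positivity)
      exact pow_le_pow_left₀ ENNReal.toReal_nonneg (hgnorm j) 2
    calc ∑ m ∈ Finset.range N, (v j m) ^ 2
        ≤ ∑ m ∈ Finset.range N, ((π / (2 * L)) ^ j / j.factorial) ^ 2 * (I j m) ^ 2 :=
          Finset.sum_le_sum fun m _ => hcoef m
      _ = ((π / (2 * L)) ^ j / j.factorial) ^ 2 * ∑ m ∈ Finset.range N, (I j m) ^ 2 := by
          rw [Finset.mul_sum]
      _ ≤ ((π / (2 * L)) ^ j / j.factorial) ^ 2 * ((L / 2) * (L ^ j * Cf) ^ 2) := by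
          apply mul_le_mul_of_nonneg_left hbessel2 (by positivity)
      _ = (r j) ^ 2 := by
          simp only [hrdef]
          have hs : Real.sqrt (L / 2) ^ 2 = L / 2 := Real.sq_sqrt (by positivity)
          calc ((π / (2 * L)) ^ j / (Nat.factorial j : ℝ)) ^ 2 * ((L / 2) * (L ^ j * Cf) ^ 2)
              = (L / 2) * (((π / (2 * L)) ^ j * L ^ j) / (Nat.factorial j : ℝ)) ^ 2 * Cf ^ 2 := by
                ring
            _ = (L / 2) * ((π / 2) ^ j / (Nat.factorial j : ℝ)) ^ 2 * Cf ^ 2 := by rw [key]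
            _ = (Real.sqrt (L / 2) * Cf * ((π / 2) ^ j / (Nat.factorial j : ℝ))) ^ 2 := by
                rw [mul_pow, mul_pow, hs]; ring
  have hc : ∀ m, HasSum (fun j => v j m)
      (∫ t in (0:ℝ)..L, f t * Real.sin (Real.sqrt (μ (m + m₀ + 1)) * t)) := by
    intro m
    set x : ℝ → ℝ := fun t => ((m + m₀ + 1 : ℕ) : ℝ) * π / L * t with hxdef
    set F : ℕ → ℝ → ℝ := fun (j : ℕ) (t : ℝ) =>
      ((δ m * t) ^ j / (Nat.factorial j : ℝ) * Real.sin (x t + j * (π / 2))) * f t with hFdef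
    have hfi : MeasureTheory.Integrable f
        (MeasureTheory.volume.restrict (Set.Ioo (0:ℝ) L)) := hf.integrable (by norm_num)
    have hbd : ∀ j : ℕ, ∀ᵐ t ∂(MeasureTheory.volume.restrict (Set.Ioo (0:ℝ) L)),
        ‖(δ m * t) ^ j / (Nat.factorial j : ℝ) * Real.sin (x t + j * (π / 2))‖
          ≤ (π / 2) ^ j / (Nat.factorial j : ℝ) := by
      intro j
      filter_upwards [MeasureTheory.ae_restrict_mem measurableSet_Ioo] with t ht
      have h1 : |δ m * t| ≤ π / 2 := by
        rw [abs_mul]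
        have h2 : |t| ≤ L := by rw [abs_of_pos ht.1]; exact le_of_lt ht.2
        calc |δ m| * |t| ≤ (π / (2 * L)) * L := by
              apply mul_le_mul (hδ m) h2 (abs_nonneg t)
              positivity
          _ = π / 2 := by field_simp
      rw [Real.norm_eq_abs, abs_mul, abs_div, abs_pow, Nat.abs_cast]
      have h3 : |δ m * t| ^ j ≤ (π / 2) ^ j := pow_le_pow_left₀ (abs_nonneg _) h1 j
      have h4 : |Real.sin (x t + j * (π / 2))| ≤ 1 := Real.abs_sin_le_one _
      calc |δ m * t| ^ j / (Nat.factorial j : ℝ) * |Real.sin (x t + j * (π / 2))|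
          ≤ |δ m * t| ^ j / (Nat.factorial j : ℝ) * 1 := by
            apply mul_le_mul_of_nonneg_left h4 (by positivity)
        _ ≤ (π / 2) ^ j / (Nat.factorial j : ℝ) := by
            rw [mul_one]; gcongr
    have hmeas : ∀ j : ℕ, MeasureTheory.AEStronglyMeasurable
        (fun t : ℝ => (δ m * t) ^ j / (Nat.factorial j : ℝ) * Real.sin (x t + j * (π / 2)))
        (MeasureTheory.volume.restrict (Set.Ioo (0:ℝ) L)) := by
      intro j
      apply Continuous.aestronglyMeasurable
      simp only [hxdef]
      fun_prop
    have hFint : ∀ j : ℕ, MeasureTheory.Integrable (F j)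
        (MeasureTheory.volume.restrict (Set.Ioo (0:ℝ) L)) := by
      intro j
      simp only [hFdef]
      exact hfi.bdd_mul (hmeas j) (hbd j)
    have hnorm_le : ∀ j : ℕ, (∫ t in Set.Ioo (0:ℝ) L, ‖F j t‖)
        ≤ (π / 2) ^ j / (Nat.factorial j : ℝ) * ∫ t in Set.Ioo (0:ℝ) L, ‖f t‖ := by
      intro j
      have hb : ∀ᵐ t ∂(MeasureTheory.volume.restrict (Set.Ioo (0:ℝ) L)),
          ‖F j t‖ ≤ (π / 2) ^ j / (Nat.factorial j : ℝ) * ‖f t‖ := by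
        filter_upwards [hbd j] with t ht
        simp only [hFdef]
        rw [norm_mul]
        exact mul_le_mul_of_nonneg_right ht (norm_nonneg _)
      calc (∫ t in Set.Ioo (0:ℝ) L, ‖F j t‖)
          ≤ ∫ t in Set.Ioo (0:ℝ) L, (π / 2) ^ j / (Nat.factorial j : ℝ) * ‖f t‖ :=
            MeasureTheory.integral_mono_ae (hFint j).norm (hfi.norm.const_mul _) hb
        _ = (π / 2) ^ j / (Nat.factorial j : ℝ) * ∫ t in Set.Ioo (0:ℝ) L, ‖f t‖ :=
            MeasureTheory.integral_const_mul _ _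
    have hsum_norm : Summable fun j => ∫ t in Set.Ioo (0:ℝ) L, ‖F j t‖ := by
      apply Summable.of_nonneg_of_le
        (fun j => MeasureTheory.integral_nonneg fun t => norm_nonneg _) hnorm_le
      exact (Real.summable_pow_div_factorial (π / 2)).mul_right _
    have hHS := MeasureTheory.hasSum_integral_of_summable_integral_norm hFint hsum_norm
    have hpt : ∀ t : ℝ, HasSum (fun j => F j t) (Real.sin (x t + δ m * t) * f t) := by
      intro t
      have := (aux_hasSum_sin_shift (x t) (δ m * t)).mul_right (f t)
      simp only [hFdef]
      exact this
    have harg : ∀ t, x t + δ m * t = Real.sqrt (μ (m + m₀ + 1)) * t := by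
      intro t; simp only [hxdef, hδdef]; ring
    have hval : (∫ t in Set.Ioo (0:ℝ) L, (∑' j, F j t))
        = ∫ t in (0:ℝ)..L, f t * Real.sin (Real.sqrt (μ (m + m₀ + 1)) * t) := by
      rw [intervalIntegral.integral_of_le hL.le, MeasureTheory.integral_Ioc_eq_integral_Ioo]
      apply MeasureTheory.integral_congr_ae
      apply Filter.Eventually.of_forall
      intro t
      show (∑' j, F j t) = f t * Real.sin (Real.sqrt (μ (m + m₀ + 1)) * t)
      rw [(hpt t).tsum_eq, harg t, mul_comm]
    have hFv : ∀ j, (∫ t in Set.Ioo (0:ℝ) L, F j t) = v j m := by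
      intro j
      have he : F j = fun t : ℝ =>
          (δ m ^ j / (Nat.factorial j : ℝ)) • (g j t * Real.sin (x t + j * (π / 2))) := by
        funext t
        simp only [hFdef, hgdef, smul_eq_mul, mul_pow]
        ring
      rw [he, MeasureTheory.integral_smul]
      simp only [hvdef, hIdef, hxdef, smul_eq_mul]
    have hfinal := hHS.congr_fun (fun j => (hFv j).symm)
    rwa [hval] at hfinal
  exact aux_summable_sq_of_decomp
    (fun m => ∫ t in (0:ℝ)..L, f t * Real.sin (Real.sqrt (μ (m + m₀ + 1)) * t))
    v r hrsum hr0 hc hv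

/-- Let `a > b > 0`, `f ∈ L²(0, a−b)`, and `(μ_m)_{m>m₀}` positive reals with
`√μ_m ∈ ((m−1/2)π/(a−b), (m+1/2)π/(a−b))`.  Then
`(∫₀^{a−b} f(t) sin(√μ_m t) dt)_{m>m₀} ∈ ℓ²`. -/
theorem stmt_13 (a b : ℝ) (hb : 0 < b) (hab : b < a) (m₀ : ℕ) (f : ℝ → ℝ) (μ : ℕ → ℝ)
    (hf : MeasureTheory.MemLp f 2
      (MeasureTheory.volume.restrict (Set.Ioo (0 : ℝ) (a - b))))
    (hμpos : ∀ m, m₀ < m → 0 < μ m)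
    (hμ : ∀ m, m₀ < m →
      Real.sqrt (μ m) ∈ Set.Ioo (((m : ℝ) - 1 / 2) * Real.pi / (a - b))
        (((m : ℝ) + 1 / 2) * Real.pi / (a - b))) :
    Summable (fun m : ℕ =>
      if m ≤ m₀ then 0
      else (∫ t in (0 : ℝ)..(a - b), f t * Real.sin (Real.sqrt (μ m) * t)) ^ 2) := by
  have hL : 0 < a - b := sub_pos.2 hab
  have hLne : a - b ≠ 0 := ne_of_gt hL
  have habs : ∀ m : ℕ, |Real.sqrt (μ (m + m₀ + 1)) - ((m + m₀ + 1 : ℕ) : ℝ) * π / (a - b)|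
      ≤ π / (2 * (a - b)) := by
    intro m
    obtain ⟨h1, h2⟩ := hμ (m + m₀ + 1) (by omega)
    have e1 : (((m + m₀ + 1 : ℕ) : ℝ) - 1 / 2) * π / (a - b)
        = ((m + m₀ + 1 : ℕ) : ℝ) * π / (a - b) - π / (2 * (a - b)) := by
      field_simp
    have e2 : (((m + m₀ + 1 : ℕ) : ℝ) + 1 / 2) * π / (a - b)
        = ((m + m₀ + 1 : ℕ) : ℝ) * π / (a - b) + π / (2 * (a - b)) := by
      field_simp
    rw [abs_le]
    rw [e1] at h1
    rw [e2] at h2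
    constructor <;> linarith
  have hmain := aux_main (a - b) hL m₀ f μ hf habs
  apply (summable_nat_add_iff (m₀ + 1)).1
  refine hmain.congr fun m => ?_
  rw [if_neg (by omega : ¬ (m + (m₀ + 1) ≤ m₀))]
  have he : m + (m₀ + 1) = m + m₀ + 1 := by omega
  rw [he]
end

section
/- Let h ∈ L²(b−a, b+a) with a > b > 0, and suppose (μ_m)_{m>m₀} are positive with (m−1/2)²π²/(a−b)² < μ_m < (m+1/2)²π²/(a−b)². Then ( ∫_{b−a}^{b+a} h(t) sin(√μ_m t) dt )_{m>m₀} ∈ ℓ². -/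
open MeasureTheory Complex Real ENNReal

noncomputable section

lemma exp_orth (L : ℝ) (hL : 0 < L) (K : ℕ) (j : ℤ) (hj : j ≠ 0) :
    ∫ t in (-(K*L:ℝ))..(K*L:ℝ), Complex.exp ((j * Real.pi / L * t : ℝ) * Complex.I) = 0 := by
  have hC : ((j * Real.pi / L : ℝ) : ℂ) * Complex.I ≠ 0 := by
    apply mul_ne_zero _ Complex.I_ne_zero
    rw [Ne, Complex.ofReal_eq_zero]
    apply div_ne_zero _ hL.ne'
    exact mul_ne_zero (Int.cast_ne_zero.mpr hj) Real.pi_ne_zero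
  have heq : ∀ t : ℝ, ((j * Real.pi / L * t : ℝ) : ℂ) * Complex.I
      = (((j * Real.pi / L : ℝ) : ℂ) * Complex.I) * (t : ℂ) := by
    intro t; push_cast; ring
  rw [intervalIntegral.integral_congr (fun t _ => by rw [heq t])]
  rw [integral_exp_mul_complex hC]
  have : Complex.exp (((j * Real.pi / L : ℝ) : ℂ) * Complex.I * ((K*L:ℝ) : ℂ))
      = Complex.exp (((j * Real.pi / L : ℝ) : ℂ) * Complex.I * ((-(K*L:ℝ) : ℝ) : ℂ)) := by
    rw [Complex.exp_eq_exp_iff_exp_sub_eq_one, Complex.exp_eq_one_iff]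
    refine ⟨j * K, ?_⟩
    have hLz : (L : ℂ) ≠ 0 := by exact_mod_cast hL.ne'
    push_cast
    field_simp
    ring
  rw [this, sub_self, zero_div]

lemma eval_clm (m : ℕ) : ∃ φ : lp (fun _ : ℕ => ℂ) 2 →L[ℂ] ℂ, ∀ f, φ f = f m := by
  refine ⟨LinearMap.mkContinuous
    { toFun := fun f => f m
      map_add' := fun f g => congrFun (lp.coeFn_add f g) m
      map_smul' := fun c f => congrFun (lp.coeFn_smul c f) m } 1
    (fun f => by simpa using lp.norm_apply_le_norm two_ne_zero f m), fun f => rfl⟩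

lemma l2_assemble (W : ℕ → ℕ → ℂ) (ε : ℕ → ℝ) (hε : Summable ε) (hεnn : ∀ n, 0 ≤ ε n)
    (hW : ∀ n, Summable (fun m => ‖W n m‖ ^ 2))
    (hWb : ∀ n, ∑' m, ‖W n m‖ ^ 2 ≤ ε n ^ 2) :
    ∃ T : ℕ → ℂ, (∀ m, HasSum (fun n => W n m) (T m)) ∧ Summable (fun m => ‖T m‖ ^ 2) := by
  have h2 : (0:ℝ) < (2 : ℝ≥0∞).toReal := by norm_num
  have hrp : ∀ (f : ℕ → ℂ) (m : ℕ), ‖f m‖ ^ ((2:ℝ≥0∞).toReal) = ‖f m‖ ^ (2:ℕ) := by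
    intro f m
    rw [show ((2:ℝ≥0∞).toReal) = ((2:ℕ):ℝ) by norm_num, Real.rpow_natCast]
  have hmem : ∀ n, Memℓp (W n) 2 := by
    intro n
    apply memℓp_gen
    simpa only [hrp] using hW n
  set 𝒲 : ℕ → lp (fun _ : ℕ => ℂ) 2 := fun n => ⟨W n, hmem n⟩ with h𝒲
  have hnorm : ∀ n, ‖𝒲 n‖ ≤ ε n := by
    intro n
    rw [lp.norm_eq_tsum_rpow h2]
    have h1 : (∑' m, ‖(𝒲 n) m‖ ^ ((2:ℝ≥0∞).toReal)) = ∑' m, ‖W n m‖ ^ (2:ℕ) := by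
      simp only [hrp]
      rfl
    rw [h1, show (1 / (2:ℝ≥0∞).toReal) = (1/2 : ℝ) by norm_num, ← Real.sqrt_eq_rpow]
    calc Real.sqrt (∑' m, ‖W n m‖ ^ 2) ≤ Real.sqrt (ε n ^ 2) := Real.sqrt_le_sqrt (hWb n)
      _ = ε n := Real.sqrt_sq (hεnn n)
  have hsum : Summable 𝒲 := by
    apply Summable.of_norm
    exact hε.of_nonneg_of_le (fun n => norm_nonneg _) hnorm
  set S := ∑' n, 𝒲 n with hS
  refine ⟨fun m => S m, fun m => ?_, ?_⟩
  · obtain ⟨φ, hφ⟩ := eval_clm m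
    have := (hsum.hasSum.mapL φ)
    simpa only [hφ] using this
  · have := (lp.memℓp S)
    rw [memℓp_gen_iff h2] at this
    simpa only [hrp] using this

lemma core (L : ℝ) (hL : 0 < L) (K : ℕ) (hK : 0 < K) (g : ℝ → ℝ)
    (hg : MemLp g 2 (volume.restrict (Set.Ioo (-(K*L:ℝ)) (K*L:ℝ))))
    (δ : ℕ → ℝ) (hδ : ∀ m, |δ m| ≤ Real.pi / (2*L)) :
    Summable (fun m => ‖∫ t in Set.Ioo (-(K*L:ℝ)) (K*L:ℝ), (g t : ℂ) *
        Complex.exp (((m * Real.pi / L + δ m) * t : ℝ) * Complex.I)‖ ^ 2) := by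
  set c : ℝ := K * L with hcdef
  have hc0 : 0 < c := by positivity
  set J : Set ℝ := Set.Ioo (-c) c with hJdef
  set ν : Measure ℝ := volume.restrict J with hνdef
  have hνuniv : ν Set.univ = ENNReal.ofReal (2*c) := by
    rw [hνdef, Measure.restrict_apply_univ, hJdef, Real.volume_Ioo]
    ring_nf
  haveI : IsFiniteMeasure ν := ⟨by rw [hνuniv]; exact ENNReal.ofReal_lt_top⟩
  set D : ℝ := Real.pi / (2*L) with hDdef
  have hD0 : 0 ≤ D := by positivity
  set ω : ℕ → ℝ := fun m => m * Real.pi / L with hωdef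
  set G : ℝ → ℂ := fun t => (g t : ℂ) with hGdef
  have hG : MemLp G 2 ν := Complex.ofRealCLM.comp_memLp' hg
  have hGi : Integrable G ν := memLp_one_iff_integrable.mp (hG.mono_exponent (by norm_num))
  -- the orthonormal family
  set r : ℝ := (Real.sqrt (2*c))⁻¹ with hrdef
  have hr0 : 0 < r := by positivity
  have hr2 : (r:ℝ)^2 * (2*c) = 1 := by
    rw [hrdef, inv_pow, Real.sq_sqrt (by positivity : (0:ℝ) ≤ 2*c)]
    field_simp
  set e : ℕ → ℝ → ℂ := fun m t => (r:ℂ) * Complex.exp (-((ω m * t : ℝ) : ℂ) * Complex.I)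
    with hedef
  have he : ∀ m, MemLp (e m) 2 ν := by
    intro m
    apply MemLp.of_bound (C := r)
    · apply Continuous.aestronglyMeasurable
      fun_prop
    · filter_upwards with t
      rw [hedef]
      simp only [norm_mul, Complex.norm_real]
      rw [show -((ω m * t : ℝ) : ℂ) * Complex.I = ((-(ω m * t) : ℝ) : ℂ) * Complex.I by push_cast; ring]
      rw [Complex.norm_exp_ofReal_mul_I]
      simp [abs_of_pos hr0]
  set v : ℕ → Lp ℂ 2 ν := fun m => (he m).toLp (e m) with hvdef
  -- pointwise product formula
  have hpt : ∀ m n : ℕ, ∀ t : ℝ, (starRingEnd ℂ) (e m t) * e n t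
      = ((r^2 : ℝ) : ℂ) * Complex.exp ((((ω m - ω n) * t : ℝ)) * Complex.I) := by
    intro m n t
    rw [hedef]
    simp only [map_mul, Complex.conj_ofReal, ← Complex.exp_conj, map_neg, Complex.conj_I,
      Complex.conj_ofReal]
    rw [mul_mul_mul_comm, ← Complex.exp_add]
    push_cast
    ring_nf
  have hortho : Orthonormal ℂ v := by
    rw [orthonormal_iff_ite]
    intro m n
    have hcoe : (inner ℂ (v m) (v n) : ℂ) = ∫ t, (starRingEnd ℂ) (e m t) * e n t ∂ν := by
      rw [MeasureTheory.L2.inner_def]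
      apply integral_congr_ae
      filter_upwards [(he m).coeFn_toLp, (he n).coeFn_toLp] with t h1 h2
      rw [hvdef]
      simp only [h1, h2]
      exact RCLike.inner_apply' _ _
    rw [hcoe, integral_congr_ae (Filter.Eventually.of_forall (hpt m n))]
    rcases eq_or_ne m n with rfl | hmn
    · rw [if_pos rfl]
      have : ∀ t : ℝ, ((r^2 : ℝ) : ℂ) * Complex.exp ((((ω m - ω m) * t : ℝ)) * Complex.I)
          = ((r^2 : ℝ) : ℂ) := by
        intro t; simp
      rw [integral_congr_ae (Filter.Eventually.of_forall this), integral_const, measureReal_def, hνuniv,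
        ENNReal.toReal_ofReal (by positivity)]
      rw [show ((2*c) • ((r^2:ℝ):ℂ)) = (((r^2 * (2*c)) : ℝ) : ℂ) by
        rw [Complex.real_smul]; push_cast; ring]
      rw [hr2]
      norm_num
    · rw [if_neg hmn, integral_const_mul]
      have hIoo : ∫ t in J, Complex.exp ((((ω m - ω n) * t : ℝ)) * Complex.I)
          = ∫ t in (-c)..c, Complex.exp ((((ω m - ω n) * t : ℝ)) * Complex.I) := by
        rw [intervalIntegral.integral_of_le (by linarith), hJdef,
          ← MeasureTheory.integral_Ioc_eq_integral_Ioo]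
      rw [hνdef] at *
      rw [hIoo]
      set j : ℤ := (m:ℤ) - (n:ℤ) with hjdef
      have hfreq : Set.EqOn (fun t : ℝ => Complex.exp ((((ω m - ω n) * t : ℝ)) * Complex.I))
          (fun t : ℝ => Complex.exp ((((j:ℝ) * Real.pi / L * t : ℝ)) * Complex.I))
          (Set.uIcc (-c) c) := by
        intro t _
        have : ((ω m - ω n) * t : ℝ) = ((j:ℝ) * Real.pi / L * t : ℝ) := by
          rw [hωdef, hjdef]
          push_cast
          ring
        simp only [this]
      rw [intervalIntegral.integral_congr hfreq]
      rw [hcdef, exp_orth L hL K j (by rw [hjdef]; exact sub_ne_zero.mpr (by exact_mod_cast hmn))]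
      simp
    -- the vectors x n = G t * t^n
  set X : ℕ → ℝ → ℂ := fun n t => G t * (t:ℂ)^n with hXdef
  have hXbound : ∀ n : ℕ, ∀ᵐ t ∂ν, ‖X n t‖ ≤ ‖((c^n : ℝ):ℂ) * G t‖ := by
    intro n
    rw [hνdef]
    filter_upwards [ae_restrict_mem measurableSet_Ioo] with t ht
    have habs : |t| ≤ c := abs_le.mpr ⟨ht.1.le, ht.2.le⟩
    have h1 : ‖X n t‖ = ‖G t‖ * |t|^n := by
      rw [hXdef]
      simp [Complex.norm_real, Real.norm_eq_abs]
    have h2 : ‖((c^n : ℝ):ℂ) * G t‖ = c^n * ‖G t‖ := by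
      simp [Complex.norm_real, Real.norm_eq_abs, abs_of_pos hc0, abs_of_pos (pow_pos hc0 n)]
    rw [h1, h2]
    calc ‖G t‖ * |t|^n ≤ ‖G t‖ * c^n :=
          mul_le_mul_of_nonneg_left (pow_le_pow_left₀ (abs_nonneg t) habs n) (norm_nonneg _)
      _ = c^n * ‖G t‖ := by ring
  have hX : ∀ n, MemLp (X n) 2 ν := by
    intro n
    apply MemLp.of_le (hG.const_mul (((c^n : ℝ):ℂ)))
    · exact hG.1.mul (Complex.continuous_ofReal.pow n).aestronglyMeasurable
    · exact hXbound n
  set x : ℕ → Lp ℂ 2 ν := fun n => (hX n).toLp (X n) with hxdef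
  set M : ℝ := (eLpNorm G 2 ν).toReal with hMdef
  have hM0 : 0 ≤ M := ENNReal.toReal_nonneg
  have hxnorm : ∀ n, ‖x n‖ ≤ c^n * M := by
    intro n
    rw [hxdef, Lp.norm_toLp]
    have h1 : eLpNorm (X n) 2 ν ≤ ‖((c^n:ℝ):ℂ)‖₊ • eLpNorm G 2 ν := by
      calc eLpNorm (X n) 2 ν ≤ eLpNorm (((c^n:ℝ):ℂ) • G) 2 ν := eLpNorm_mono_ae (hXbound n)
        _ = ‖((c^n:ℝ):ℂ)‖₊ • eLpNorm G 2 ν := eLpNorm_const_smul _ _ _ _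
    have h3 : ‖((c^n:ℝ):ℂ)‖₊ • eLpNorm G 2 ν < ⊤ := ENNReal.mul_lt_top ENNReal.coe_lt_top hG.2
    have h4 := ENNReal.toReal_mono h3.ne h1
    apply le_trans h4
    rw [ENNReal.smul_def, smul_eq_mul, ENNReal.toReal_mul, ENNReal.coe_toReal, coe_nnnorm,
      Complex.norm_real, Real.norm_eq_abs, abs_of_pos (pow_pos hc0 n)]
    -- the coefficients A m n and their relation to inner products
  set A : ℕ → ℕ → ℂ := fun m n =>
    ∫ t, G t * (t:ℂ)^n * Complex.exp (((ω m * t : ℝ)) * Complex.I) ∂ν with hAdef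
  have hconj : ∀ m : ℕ, ∀ t : ℝ, (starRingEnd ℂ) (e m t)
      = (r:ℂ) * Complex.exp (((ω m * t : ℝ)) * Complex.I) := by
    intro m t
    rw [hedef]
    simp only [map_mul, Complex.conj_ofReal, ← Complex.exp_conj, map_neg, Complex.conj_I,
      Complex.conj_ofReal]
    ring_nf
  have hAinner : ∀ m n, (inner ℂ (v m) (x n) : ℂ) = (r:ℂ) * A m n := by
    intro m n
    rw [MeasureTheory.L2.inner_def, hAdef, ← integral_const_mul]
    apply integral_congr_ae
    filter_upwards [(he m).coeFn_toLp, (hX n).coeFn_toLp] with t h1 h2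
    rw [hvdef, hxdef]
    simp only [h1, h2]
    rw [RCLike.inner_apply']
    show (starRingEnd ℂ) (e m t) * X n t = _
    rw [hconj m t, hXdef]
    ring
  have hBsum : ∀ n, Summable (fun m => ‖(inner ℂ (v m) (x n) : ℂ)‖^2) := fun n =>
    hortho.inner_products_summable (x n)
  have hBle : ∀ n, ∑' m, ‖(inner ℂ (v m) (x n) : ℂ)‖^2 ≤ ‖x n‖^2 := fun n =>
    hortho.tsum_inner_products_le (x n)
  -- the double-indexed coefficients
  set W : ℕ → ℕ → ℂ := fun n m =>
    (Complex.I * ((δ m : ℝ):ℂ))^n / (n.factorial : ℂ) * A m n with hWdef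
  have hAr : ∀ m n, ‖A m n‖ = Real.sqrt (2*c) * ‖(inner ℂ (v m) (x n) : ℂ)‖ := by
    intro m n
    have h1 : ‖(inner ℂ (v m) (x n) : ℂ)‖ = r * ‖A m n‖ := by
      rw [hAinner m n, norm_mul, Complex.norm_real, Real.norm_eq_abs, abs_of_pos hr0]
    rw [h1, hrdef]
    have : Real.sqrt (2*c) ≠ 0 := by positivity
    field_simp
  have hWnorm : ∀ n m, ‖W n m‖ ≤ (D^n / n.factorial * Real.sqrt (2*c))
      * ‖(inner ℂ (v m) (x n) : ℂ)‖ := by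
    intro n m
    rw [hWdef]
    have h1 : ‖(Complex.I * ((δ m : ℝ):ℂ))^n / (n.factorial : ℂ) * A m n‖
        = |δ m|^n / n.factorial * ‖A m n‖ := by
      rw [norm_mul, norm_div, norm_pow, norm_mul, Complex.norm_I, one_mul, Complex.norm_real,
        Real.norm_eq_abs]
      congr 2
      simp
    rw [h1, hAr m n]
    have h2 : |δ m|^n ≤ D^n := pow_le_pow_left₀ (abs_nonneg _) (hδ m) n
    calc |δ m|^n / n.factorial * (Real.sqrt (2*c) * ‖(inner ℂ (v m) (x n) : ℂ)‖)
        ≤ D^n / n.factorial * (Real.sqrt (2*c) * ‖(inner ℂ (v m) (x n) : ℂ)‖) := by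
          gcongr
      _ = (D^n / n.factorial * Real.sqrt (2*c)) * ‖(inner ℂ (v m) (x n) : ℂ)‖ := by ring
  set ε : ℕ → ℝ := fun n => (D*c)^n / n.factorial * (Real.sqrt (2*c) * M) with hεdef
  have hεnn : ∀ n, 0 ≤ ε n := by
    intro n
    rw [hεdef]
    positivity
  have hε : Summable ε := (Real.summable_pow_div_factorial (D*c)).mul_right _
  have hWle : ∀ n m, ‖W n m‖^2 ≤ (D^n / n.factorial * Real.sqrt (2*c))^2
      * ‖(inner ℂ (v m) (x n) : ℂ)‖^2 := by
    intro n m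
    calc ‖W n m‖^2 ≤ ((D^n / n.factorial * Real.sqrt (2*c)) * ‖(inner ℂ (v m) (x n) : ℂ)‖)^2 :=
          pow_le_pow_left₀ (norm_nonneg _) (hWnorm n m) 2
      _ = _ := by ring
  have hW2 : ∀ n, Summable (fun m => ‖W n m‖^2) := by
    intro n
    apply Summable.of_nonneg_of_le (fun m => by positivity) (hWle n)
    exact (hBsum n).mul_left _
  have hWb : ∀ n, ∑' m, ‖W n m‖^2 ≤ ε n ^ 2 := by
    intro n
    calc ∑' m, ‖W n m‖^2
        ≤ ∑' m, (D^n / n.factorial * Real.sqrt (2*c))^2 * ‖(inner ℂ (v m) (x n) : ℂ)‖^2 :=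
          Summable.tsum_le_tsum (hWle n) (hW2 n) ((hBsum n).mul_left _)
      _ = (D^n / n.factorial * Real.sqrt (2*c))^2 * ∑' m, ‖(inner ℂ (v m) (x n) : ℂ)‖^2 :=
          tsum_mul_left
      _ ≤ (D^n / n.factorial * Real.sqrt (2*c))^2 * ‖x n‖^2 := by
          gcongr
          exact hBle n
      _ ≤ (D^n / n.factorial * Real.sqrt (2*c))^2 * (c^n * M)^2 :=
          mul_le_mul_of_nonneg_left (pow_le_pow_left₀ (norm_nonneg _) (hxnorm n) 2)
            (by positivity)
      _ = ε n ^ 2 := by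
          rw [hεdef]
          simp only [mul_pow]
          ring
  obtain ⟨T, hT1, hT2⟩ := l2_assemble W ε hε hεnn hW2 hWb
    -- identify T m with the desired integral
  have hTm : ∀ m, T m = ∫ t, G t * Complex.exp ((((ω m + δ m) * t : ℝ)) * Complex.I) ∂ν := by
    intro m
    refine (hT1 m).unique ?_
    set f : ℕ → ℝ → ℂ := fun n t => G t * (Complex.exp (((ω m * t : ℝ)) * Complex.I)
      * (Complex.I * ((δ m : ℝ):ℂ) * (t:ℂ))^n / (n.factorial : ℂ)) with hfdef
    have hfb : ∀ n : ℕ, ∀ᵐ t ∂ν, ‖f n t‖ ≤ ‖G t‖ * ((D*c)^n / n.factorial) := by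
      intro n
      rw [hνdef]
      filter_upwards [ae_restrict_mem measurableSet_Ioo] with t ht
      have habs : |t| ≤ c := abs_le.mpr ⟨ht.1.le, ht.2.le⟩
      rw [hfdef]
      have h1 : ‖G t * (Complex.exp (((ω m * t : ℝ)) * Complex.I)
          * (Complex.I * ((δ m : ℝ):ℂ) * (t:ℂ))^n / (n.factorial : ℂ))‖
          = ‖G t‖ * ((|δ m| * |t|)^n / n.factorial) := by
        rw [norm_mul, mul_div_assoc, norm_mul, Complex.norm_exp_ofReal_mul_I, one_mul,
          norm_div, norm_pow]
        congr 3
        · rw [norm_mul, norm_mul, Complex.norm_I, one_mul, Complex.norm_real, Complex.norm_real,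
            Real.norm_eq_abs, Real.norm_eq_abs]
        · simp
      rw [h1]
      apply mul_le_mul_of_nonneg_left _ (norm_nonneg _)
      apply (div_le_div_iff_of_pos_right (by positivity : (0:ℝ) < n.factorial)).mpr
      apply pow_le_pow_left₀ (by positivity)
      exact mul_le_mul (hδ m) habs (abs_nonneg t) hD0
    have hfm : ∀ n : ℕ, AEStronglyMeasurable (f n) ν := by
      intro n
      apply hG.1.mul
      apply Continuous.aestronglyMeasurable
      fun_prop
    have hfi : ∀ n, Integrable (f n) ν := fun n =>
      Integrable.mono' (hGi.norm.mul_const _) (hfm n) (hfb n)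
    have hfint : ∀ n, ∫ t, ‖f n t‖ ∂ν ≤ (∫ t, ‖G t‖ ∂ν) * ((D*c)^n / n.factorial) := by
      intro n
      rw [← integral_mul_const]
      exact integral_mono_ae (hfi n).norm (hGi.norm.mul_const _) (hfb n)
    have hsumnorm : Summable fun n => ∫ t, ‖f n t‖ ∂ν := by
      apply Summable.of_nonneg_of_le (fun n => integral_nonneg (fun t => norm_nonneg _)) hfint
      exact ((Real.summable_pow_div_factorial (D*c)).mul_left _)
    have hHS := hasSum_integral_of_summable_integral_norm hfi hsumnorm
    have htsum : ∀ t : ℝ, (∑' n, f n t)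
        = G t * Complex.exp ((((ω m + δ m) * t : ℝ)) * Complex.I) := by
      intro t
      rw [hfdef]
      simp only
      rw [tsum_mul_left]
      congr 1
      have harr : (fun n : ℕ => Complex.exp (((ω m * t : ℝ)) * Complex.I)
            * (Complex.I * ((δ m : ℝ):ℂ) * (t:ℂ))^n / (n.factorial : ℂ))
          = fun n : ℕ => Complex.exp (((ω m * t : ℝ)) * Complex.I)
            * ((Complex.I * ((δ m : ℝ):ℂ) * (t:ℂ))^n / (n.factorial : ℂ)) := by
        funext n
        ring
      rw [harr, tsum_mul_left]
      have hexp : (∑' n : ℕ, (Complex.I * ((δ m:ℝ):ℂ) * (t:ℂ))^n / (n.factorial : ℂ))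
          = Complex.exp (Complex.I * ((δ m:ℝ):ℂ) * (t:ℂ)) := by
        rw [Complex.exp_eq_exp_ℂ, NormedSpace.exp_eq_tsum_div]
      rw [hexp, ← Complex.exp_add]
      congr 1
      push_cast
      ring
    have hWint : ∀ n, (∫ t, f n t ∂ν) = W n m := by
      intro n
      simp only [hWdef, hAdef]
      rw [← integral_const_mul]
      apply integral_congr_ae
      apply Filter.Eventually.of_forall
      intro t
      simp only [hfdef]
      ring
    rw [integral_congr_ae (Filter.Eventually.of_forall htsum)] at hHS
    simp only [hWint] at hHS
    exact hHS
  exact hT2.congr (fun m => by rw [hTm m])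

/-- Let `h ∈ L²(b−a, b+a)` with `a > b > 0`, and `(μ_m)_{m>m₀}` positive with
`(m−1/2)²π²/(a−b)² < μ_m < (m+1/2)²π²/(a−b)²`.  Then
`(∫_{b−a}^{b+a} h(t) sin(√μ_m t) dt)_{m>m₀} ∈ ℓ²`. -/
theorem stmt_14 (a b : ℝ) (hb : 0 < b) (hab : b < a) (m₀ : ℕ) (h : ℝ → ℝ) (μ : ℕ → ℝ)
    (hh : MeasureTheory.MemLp h 2
      (MeasureTheory.volume.restrict (Set.Ioo (b - a) (b + a))))
    (hμpos : ∀ m, m₀ < m → 0 < μ m)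
    (hμ : ∀ m, m₀ < m →
      ((m : ℝ) - 1 / 2) ^ 2 * Real.pi ^ 2 / (a - b) ^ 2 < μ m ∧
      μ m < ((m : ℝ) + 1 / 2) ^ 2 * Real.pi ^ 2 / (a - b) ^ 2) :
    Summable (fun m : ℕ =>
      if m ≤ m₀ then 0
      else (∫ t in (b - a)..(b + a), h t * Real.sin (Real.sqrt (μ m) * t)) ^ 2) := by
  set L : ℝ := a - b with hLdef
  have hL : 0 < L := by rw [hLdef]; linarith
  set K : ℕ := ⌈(a+b)/L⌉₊ with hKdef
  have hK : 0 < K := by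
    rw [hKdef]
    apply Nat.ceil_pos.mpr
    exact div_pos (by linarith) hL
  have hcge : a + b ≤ (K:ℝ) * L := by
    have h1 : (a+b)/L ≤ (K:ℝ) := Nat.le_ceil _
    calc a + b = ((a+b)/L) * L := by field_simp
      _ ≤ (K:ℝ) * L := mul_le_mul_of_nonneg_right h1 hL.le
  have hsub : Set.Ioo (b-a) (b+a) ⊆ Set.Ioo (-((K:ℝ)*L)) ((K:ℝ)*L) :=
    Set.Ioo_subset_Ioo (by linarith) (by linarith)
  set g : ℝ → ℝ := (Set.Ioo (b-a) (b+a)).indicator h with hgdef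
  have hgm : MemLp g 2 (volume.restrict (Set.Ioo (-((K:ℝ)*L)) ((K:ℝ)*L))) := by
    have h1 : MemLp g 2 volume := by
      constructor
      · exact (aestronglyMeasurable_indicator_iff measurableSet_Ioo).mpr hh.1
      · rw [hgdef, eLpNorm_indicator_eq_eLpNorm_restrict measurableSet_Ioo]
        exact hh.2
    exact h1.restrict _
  set δ : ℕ → ℝ := fun m => if m ≤ m₀ then 0 else Real.sqrt (μ m) - m * Real.pi / L with hδdef
  have hδb : ∀ m, |δ m| ≤ Real.pi / (2*L) := by
    intro m
    simp only [hδdef]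
    by_cases hm : m ≤ m₀
    · rw [if_pos hm, abs_zero]
      positivity
    · rw [if_neg hm]
      have hms : m₀ < m := not_le.mp hm
      have hm1 : (1:ℝ) ≤ (m:ℝ) := by exact_mod_cast Nat.one_le_iff_ne_zero.mpr (by omega)
      obtain ⟨hlo, hhi⟩ := hμ m hms
      have e1 : ((m:ℝ)+1/2) * (Real.pi/L) = m * Real.pi / L + Real.pi/(2*L) := by
        field_simp
      have e2 : ((m:ℝ)-1/2) * (Real.pi/L) = m * Real.pi / L - Real.pi/(2*L) := by
        field_simp
      have hup : Real.sqrt (μ m) < ((m:ℝ)+1/2) * (Real.pi/L) := by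
        rw [Real.sqrt_lt' (by positivity)]
        calc μ m < ((m:ℝ) + 1/2)^2 * Real.pi^2 / L^2 := hhi
          _ = (((m:ℝ)+1/2) * (Real.pi/L))^2 := by field_simp
      have hdn : ((m:ℝ)-1/2) * (Real.pi/L) < Real.sqrt (μ m) := by
        rw [Real.lt_sqrt (mul_nonneg (by linarith) (by positivity))]
        calc (((m:ℝ)-1/2) * (Real.pi/L))^2 = ((m:ℝ) - 1/2)^2 * Real.pi^2 / L^2 := by
              field_simp
          _ < μ m := hlo
      rw [abs_le]
      constructor
      · nlinarith [hdn, e2]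
      · nlinarith [hup, e1]
  have hcore := core L hL K hK g hgm δ hδb
  apply Summable.of_nonneg_of_le _ _ hcore
  · intro m
    split
    · exact le_rfl
    · positivity
  · intro m
    by_cases hm : m ≤ m₀
    · rw [if_pos hm]
      positivity
    · rw [if_neg hm]
      have hms : m₀ < m := not_le.mp hm
      have hsq : Real.sqrt (μ m) = (m:ℝ) * Real.pi / L + δ m := by
        simp only [hδdef, if_neg hm]
        ring
      set lam : ℝ := (m:ℝ) * Real.pi / L + δ m with hlamdef
      set J : Set ℝ := Set.Ioo (-((K:ℝ)*L)) ((K:ℝ)*L) with hJdef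
      set ν : Measure ℝ := volume.restrict J with hνdef
      set F : ℂ := ∫ t, (g t : ℂ) * Complex.exp (((lam * t : ℝ)) * Complex.I) ∂ν with hFdef
      -- integrability
      have hgm2 : MemLp (fun t => (g t : ℂ)) 2 ν := Complex.ofRealCLM.comp_memLp' hgm
      haveI : IsFiniteMeasure ν := by
        constructor
        rw [hνdef, Measure.restrict_apply_univ, hJdef, Real.volume_Ioo]
        exact ENNReal.ofReal_lt_top
      have hgi : Integrable (fun t => (g t : ℂ)) ν :=
        memLp_one_iff_integrable.mp (hgm2.mono_exponent (by norm_num))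
      have hFi : Integrable (fun t => (g t : ℂ) * Complex.exp (((lam * t : ℝ)) * Complex.I)) ν := by
        apply Integrable.mono' hgi.norm
        · apply hgm2.1.mul
          apply Continuous.aestronglyMeasurable
          fun_prop
        · filter_upwards with t
          rw [norm_mul, Complex.norm_exp_ofReal_mul_I, mul_one, Complex.norm_real]
      -- the imaginary part identity
      have him : (∫ t in (b - a)..(b + a), h t * Real.sin (Real.sqrt (μ m) * t)) = F.im := by
        have h1 : F.im = ∫ t, ((fun z : ℂ => z.im) ((g t : ℂ)
            * Complex.exp (((lam * t : ℝ)) * Complex.I))) ∂ν := by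
          rw [hFdef]
          exact (Complex.imCLM.integral_comp_comm hFi).symm
        have h2 : ∀ t : ℝ, ((g t : ℂ) * Complex.exp (((lam * t : ℝ)) * Complex.I)).im
            = g t * Real.sin (lam * t) := by
          intro t
          rw [Complex.mul_im, Complex.ofReal_re, Complex.ofReal_im, Complex.exp_ofReal_mul_I_im]
          ring
        rw [h1, integral_congr_ae (Filter.Eventually.of_forall (fun t => h2 t))]
        have h3 : ∀ t : ℝ, g t * Real.sin (lam * t)
            = (Set.Ioo (b-a) (b+a)).indicator (fun s => h s * Real.sin (lam * s)) t := by
          intro t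
          rw [hgdef]
          by_cases ht : t ∈ Set.Ioo (b-a) (b+a)
          · rw [Set.indicator_of_mem ht, Set.indicator_of_mem ht]
          · rw [Set.indicator_of_notMem ht, Set.indicator_of_notMem ht, zero_mul]
        rw [integral_congr_ae (Filter.Eventually.of_forall (fun t => h3 t))]
        rw [hνdef, integral_indicator measurableSet_Ioo, Measure.restrict_restrict measurableSet_Ioo,
          Set.inter_eq_self_of_subset_left (by rw [hJdef]; exact hsub)]
        rw [intervalIntegral.integral_of_le (by linarith), ← MeasureTheory.integral_Ioc_eq_integral_Ioo]
        apply integral_congr_ae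
        apply Filter.Eventually.of_forall
        intro t
        rw [hsq]
      rw [him]
      have h4 : F.im^2 ≤ ‖F‖^2 := by
        have h5 := Complex.abs_im_le_norm F
        have h6 : |F.im|^2 ≤ ‖F‖^2 := pow_le_pow_left₀ (abs_nonneg _) h5 2
        rw [_root_.sq_abs] at h6
        exact h6
      exact h4
end
end
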